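/- arXiv:1505.01794 — 7 statements merged into one kernel-verified Lean document; each statement's English description precedes it below -/
import Mathlib

section
/- Let λ ∈ ℂ satisfy Re λ > -c/2. Then for every u in the domain D(A) one has |⟪λ²u + λ(Bu) + Au, u⟫| ≥ |Im λ|·(c + 2·Re λ)·‖u‖². -/
open scoped ComplexInnerProductSpace

/-- For `λ` with `Re λ > -c/2` and `u ∈ D(A)`,
`|⟪λ²u + λ(Bu) + Au, u⟫| ≥ |Im λ|·(c + 2·Re λ)·‖u‖²`. -/
theorem stmt0
    {H : Type*} [NormedAddCommGroup H] [InnerProductSpace ℂ H] [CompleteSpace H]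
    (A : H →ₗ.[ℂ] H) (hA_sa : IsSelfAdjoint A)
    (hA_pos : ∀ u : A.domain, u ≠ 0 → 0 < (⟪A u, (u : H)⟫).re)
    (B : H →L[ℂ] H) (hB_sa : IsSelfAdjoint B)
    (c : ℝ) (hc : 0 < c)
    (hB_pos : ∀ u : H, c * ‖u‖ ^ 2 ≤ (⟪B u, u⟫).re)
    (lam : ℂ) (hlam : -c / 2 < lam.re) (u : A.domain) :
    |lam.im| * (c + 2 * lam.re) * ‖(u : H)‖ ^ 2 ≤
      ‖⟪lam ^ 2 • (u : H) + lam • B (u : H) + A u, (u : H)⟫‖ := by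
  -- A is symmetric on its domain
  have hd := hA_sa.dense_domain
  have hformal : A.IsFormalAdjoint A := by
    have h := LinearPMap.adjoint_isFormalAdjoint (T := A) hd
    rwa [LinearPMap.isSelfAdjoint_def.mp hA_sa] at h
  have hAim : (⟪A u, (u : H)⟫).im = 0 := by
    have h1 : ⟪A u, (u : H)⟫ = ⟪(u : H), A u⟫ := hformal u u
    have h2 : ⟪(u : H), A u⟫ = starRingEnd ℂ ⟪A u, (u : H)⟫ := (inner_conj_symm _ _).symm
    have := h1.trans h2
    have := congrArg Complex.im this
    simp only [Complex.conj_im] at this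
    linarith
  have hBim : (⟪B (u : H), (u : H)⟫).im = 0 := by
    have h1 : ⟪B (u : H), (u : H)⟫ = ⟪(u : H), B (u : H)⟫ := hB_sa.isSymmetric _ _
    have h2 : ⟪(u : H), B (u : H)⟫ = starRingEnd ℂ ⟪B (u : H), (u : H)⟫ :=
      (inner_conj_symm _ _).symm
    have := congrArg Complex.im (h1.trans h2)
    simp only [Complex.conj_im] at this
    linarith
  set n : ℝ := ‖(u : H)‖ ^ 2 with hn
  have hn0 : 0 ≤ n := by positivity
  have hinner_self : ⟪(u : H), (u : H)⟫ = (n : ℂ) := by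
    rw [hn]; exact_mod_cast inner_self_eq_norm_sq_to_K (𝕜 := ℂ) (u : H)
  set q : ℂ := ⟪lam ^ 2 • (u : H) + lam • B (u : H) + A u, (u : H)⟫ with hq
  have hq_eq : q = starRingEnd ℂ (lam ^ 2) * (n : ℂ)
      + starRingEnd ℂ lam * ⟪B (u : H), (u : H)⟫ + ⟪A u, (u : H)⟫ := by
    rw [hq, inner_add_left, inner_add_left, inner_smul_left, inner_smul_left, hinner_self]
  have hqim : q.im = -(lam.im * (2 * lam.re * n + (⟪B (u : H), (u : H)⟫).re)) := by
    rw [hq_eq]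
    simp [Complex.add_im, Complex.mul_im, Complex.conj_re, Complex.conj_im, hAim, hBim,
      Complex.sq_norm, pow_two, Complex.mul_re, Complex.mul_im]
    ring
  have hb : c * n ≤ (⟪B (u : H), (u : H)⟫).re := hB_pos (u : H)
  have hkey : |lam.im| * (c + 2 * lam.re) * n ≤ |q.im| := by
    rw [hqim, abs_neg, abs_mul]
    have h1 : 0 ≤ 2 * lam.re * n + (⟪B (u : H), (u : H)⟫).re := by nlinarith
    rw [abs_of_nonneg h1]
    have : (c + 2 * lam.re) * n ≤ 2 * lam.re * n + (⟪B (u : H), (u : H)⟫).re := by nlinarith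
    calc |lam.im| * (c + 2 * lam.re) * n = |lam.im| * ((c + 2 * lam.re) * n) := by ring
      _ ≤ |lam.im| * (2 * lam.re * n + (⟪B (u : H), (u : H)⟫).re) := by
          exact mul_le_mul_of_nonneg_left this (abs_nonneg _)
  calc |lam.im| * (c + 2 * lam.re) * n ≤ |q.im| := hkey
    _ ≤ ‖q‖ := Complex.abs_im_le_norm q
end

section
/- There exist constants δ > 0 and C > 0 such that for every λ ∈ ℂ with Re λ > -δ and Im λ ≠ 0, the map v ↦ λ²v + λ(Bv) + Av is a bijection from the domain D(A) onto H, and its inverse R(λ) satisfies ‖R(λ)f‖ ≤ C·|Im λ|⁻¹·‖f‖ for all f ∈ H. -/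
open scoped ComplexInnerProductSpace

open LinearPMap in
lemma pmap_congr_aux {H : Type*} [NormedAddCommGroup H] [InnerProductSpace ℂ H]
    {A A' : H →ₗ.[ℂ] H} (h : A = A') (x : A.domain) (hx : (x : H) ∈ A'.domain) :
    A x = A' ⟨x, hx⟩ := by
  subst h
  rfl

open LinearPMap in
lemma sa_symm_aux {H : Type*} [NormedAddCommGroup H] [InnerProductSpace ℂ H] [CompleteSpace H]
    {A : H →ₗ.[ℂ] H} (hA : A† = A) (x y : A.domain) :
    ⟪A x, (y : H)⟫ = ⟪(x : H), A y⟫ := by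
  have hd : Dense (A.domain : Set H) := (LinearPMap.isSelfAdjoint_def.mpr hA).dense_domain
  have hdom : A†.domain = A.domain := congrArg LinearPMap.domain hA
  have hx' : (x : H) ∈ A†.domain := by rw [hdom]; exact x.2
  have h1 := LinearPMap.adjoint_isFormalAdjoint hd ⟨(x : H), hx'⟩ y
  rwa [pmap_congr_aux hA ⟨(x : H), hx'⟩ x.2,
    show (⟨(x : H), x.2⟩ : A.domain) = x from Subtype.ext rfl] at h1

open LinearPMap in
lemma sa_closed_aux {H : Type*} [NormedAddCommGroup H] [InnerProductSpace ℂ H] [CompleteSpace H]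
    {A : H →ₗ.[ℂ] H} (hA : A† = A) : IsClosed (A.graph : Set (H × H)) := by
  have hd : Dense (A.domain : Set H) := (LinearPMap.isSelfAdjoint_def.mpr hA).dense_domain
  have hset : (A.graph : Set (H × H)) =
      ⋂ v : A.domain, {p : H × H | ⟪p.2, (v : H)⟫ - ⟪p.1, A v⟫ = 0} := by
    ext p
    simp only [Set.mem_iInter, Set.mem_setOf_eq, sub_eq_zero, SetLike.mem_coe]
    constructor
    · rintro hp v
      rw [LinearPMap.mem_graph_iff] at hp
      obtain ⟨x, hx1, hx2⟩ := hp
      rw [← hx1, ← hx2]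
      exact sa_symm_aux hA x v
    · intro hp
      have hmem : p.1 ∈ A†.domain :=
        LinearPMap.mem_adjoint_domain_of_exists (T := A) p.1 ⟨p.2, fun x => hp x⟩
      have hmem' : p.1 ∈ A.domain := by
        rw [← congrArg LinearPMap.domain hA]; exact hmem
      have happ : A† ⟨p.1, hmem⟩ = p.2 :=
        LinearPMap.adjoint_apply_eq hd ⟨p.1, hmem⟩ (fun x => hp x)
      have : A ⟨p.1, hmem'⟩ = p.2 := by
        rw [← pmap_congr_aux hA ⟨p.1, hmem⟩ hmem', happ]
      rw [LinearPMap.mem_graph_iff]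
      exact ⟨⟨p.1, hmem'⟩, rfl, this⟩
  rw [hset]
  refine isClosed_iInter fun v => ?_
  exact isClosed_eq ((continuous_snd.inner continuous_const).sub
    (continuous_fst.inner continuous_const)) continuous_const

/-- There exist `δ > 0` and `C > 0` such that for every `λ ∈ ℂ` with
`Re λ > -δ` and `Im λ ≠ 0`, the map `v ↦ λ²v + λ(Bv) + Av` is a bijection from `D(A)`
onto `H`, and its inverse `R(λ)` satisfies `‖R(λ)f‖ ≤ C·|Im λ|⁻¹·‖f‖`. -/
theorem stmt1
    {H : Type*} [NormedAddCommGroup H] [InnerProductSpace ℂ H] [CompleteSpace H]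
    (A : H →ₗ.[ℂ] H) (hA_sa : IsSelfAdjoint A)
    (hA_pos : ∀ u : A.domain, u ≠ 0 → 0 < (⟪A u, (u : H)⟫).re)
    (B : H →L[ℂ] H) (hB_sa : IsSelfAdjoint B)
    (c : ℝ) (hc : 0 < c)
    (hB_pos : ∀ u : H, c * ‖u‖ ^ 2 ≤ (⟪B u, u⟫).re) :
    ∃ δ > (0:ℝ), ∃ C > (0:ℝ), ∀ lam : ℂ, -δ < lam.re → lam.im ≠ 0 →
      Function.Bijective (fun v : A.domain => lam ^ 2 • (v : H) + lam • B (v : H) + A v) ∧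
      ∀ (f : H) (v : A.domain),
        lam ^ 2 • (v : H) + lam • B (v : H) + A v = f →
        ‖(v : H)‖ ≤ C * |lam.im|⁻¹ * ‖f‖ := by
  have hAeq : LinearPMap.adjoint A = A := hA_sa
  have hdense : Dense (A.domain : Set H) := hA_sa.dense_domain
  have hAclosed : IsClosed (A.graph : Set (H × H)) := sa_closed_aux hAeq
  have hBsym : ∀ x y : H, ⟪B x, y⟫ = ⟪x, B y⟫ := by
    intro x y
    rw [← ContinuousLinearMap.adjoint_inner_right B x y, hB_sa.adjoint_eq]
  have hAsymm : ∀ x y : A.domain, ⟪A x, (y : H)⟫ = ⟪(x : H), A y⟫ := sa_symm_aux hAeq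
  -- the key coercivity estimate
  have key : ∀ lam : ℂ, -(c/4) < lam.re → ∀ (v : A.domain) (f : H),
      lam ^ 2 • (v : H) + lam • B (v : H) + A v = f →
      c/2 * |lam.im| * ‖(v : H)‖^2 ≤ ‖f‖ * ‖(v : H)‖ := by
    intro lam hre v f hf
    set x : H := (v : H) with hx
    have hn : ⟪x, x⟫ = (‖x‖ : ℂ) ^ 2 := inner_self_eq_norm_sq_to_K x
    have hr : (⟪B x, x⟫).im = 0 := by
      rw [← Complex.conj_eq_iff_im, inner_conj_symm]
      exact (hBsym x x).symm
    have hs : (⟪A v, x⟫).im = 0 := by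
      rw [← Complex.conj_eq_iff_im, inner_conj_symm]
      exact (hAsymm v v).symm
    have hI : ⟪f, x⟫ = (starRingEnd ℂ) (lam ^ 2) * ⟪x, x⟫
        + (starRingEnd ℂ) lam * ⟪B x, x⟫ + ⟪A v, x⟫ := by
      rw [← hf]
      simp [inner_add_left, inner_smul_left]; ring
    have him : (⟪f, x⟫).im = -lam.im * (2 * lam.re * ‖x‖^2 + (⟪B x, x⟫).re) := by
      rw [hI, hn]
      simp only [Complex.add_im, Complex.mul_im, pow_two, Complex.mul_re,
        Complex.conj_re, Complex.conj_im, Complex.ofReal_re, Complex.ofReal_im, hr, hs]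
      ring
    have hS : c/2 * ‖x‖^2 ≤ 2 * lam.re * ‖x‖^2 + (⟪B x, x⟫).re := by
      nlinarith [hB_pos x, sq_nonneg ‖x‖]
    calc c/2 * |lam.im| * ‖x‖^2 = |lam.im| * (c/2 * ‖x‖^2) := by ring
      _ ≤ |lam.im| * (2 * lam.re * ‖x‖^2 + (⟪B x, x⟫).re) :=
          mul_le_mul_of_nonneg_left hS (abs_nonneg _)
      _ = |(⟪f, x⟫).im| := by
          rw [him, abs_mul, abs_neg]
          congr 1
          rw [abs_of_nonneg (le_trans (by positivity) hS)]
      _ ≤ ‖⟪f, x⟫‖ := Complex.abs_im_le_norm _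
      _ ≤ ‖f‖ * ‖x‖ := norm_inner_le_norm f x
  -- the norm bound
  have hbound : ∀ lam : ℂ, -(c/4) < lam.re → lam.im ≠ 0 → ∀ (v : A.domain) (f : H),
      lam ^ 2 • (v : H) + lam • B (v : H) + A v = f →
      ‖(v : H)‖ ≤ 2/c * |lam.im|⁻¹ * ‖f‖ := by
    intro lam hre him v f hf
    have habs : 0 < |lam.im| := abs_pos.mpr him
    by_cases hv : ‖(v : H)‖ = 0
    · rw [hv]; positivity
    · have hv' : 0 < ‖(v : H)‖ := (norm_nonneg _).lt_of_ne (Ne.symm hv)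
      have hk := key lam hre v f hf
      have h2 : c/2 * |lam.im| * ‖(v : H)‖ ≤ ‖f‖ := by
        have := mul_le_mul_of_nonneg_right hk (le_of_lt (inv_pos.mpr hv'))
        calc c/2 * |lam.im| * ‖(v : H)‖
            = c/2 * |lam.im| * ‖(v : H)‖^2 * ‖(v : H)‖⁻¹ := by
              field_simp
          _ ≤ ‖f‖ * ‖(v : H)‖ * ‖(v : H)‖⁻¹ := this
          _ = ‖f‖ := by field_simp
      rw [show 2/c * |lam.im|⁻¹ * ‖f‖ = ‖f‖ / (c/2 * |lam.im|) by field_simp,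
        le_div_iff₀ (by positivity)]
      linarith [h2]
  refine ⟨c/4, by positivity, 2/c, by positivity, fun lam hre him => ?_⟩
  have habs : 0 < |lam.im| := abs_pos.mpr him
  set K : ℝ := 2/c * |lam.im|⁻¹ with hK
  have hKpos : 0 < K := by positivity
  -- the operator as a linear map
  set Lm : A.domain →ₗ[ℂ] H :=
    { toFun := fun v => lam ^ 2 • (v : H) + lam • B (v : H) + A v
      map_add' := by
        intro x y
        simp only [Submodule.coe_add, smul_add, map_add, LinearPMap.map_add]
        abel
      map_smul' := by
        intro a x
        simp only [Submodule.coe_smul, map_smul, LinearPMap.map_smul, RingHom.id_apply,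
          smul_add, smul_comm a]
    } with hLm
  have hLmApply : ∀ v : A.domain, Lm v = lam ^ 2 • (v : H) + lam • B (v : H) + A v :=
    fun v => rfl
  have hb : ∀ (v : A.domain) (f : H), Lm v = f → ‖(v : H)‖ ≤ K * ‖f‖ :=
    fun v f hf => hbound lam hre him v f hf
  -- injectivity
  have hinj : Function.Injective (fun v : A.domain => lam ^ 2 • (v : H) + lam • B (v : H) + A v) := by
    intro v w h
    have h0 : Lm (v - w) = 0 := by
      rw [map_sub]
      exact sub_eq_zero.mpr h
    have := hb (v - w) 0 h0
    rw [norm_zero, mul_zero] at this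
    have hvw : ((v - w : A.domain) : H) = 0 := norm_le_zero_iff.mp this
    have : v - w = 0 := by exact_mod_cast hvw
    exact sub_eq_zero.mp this
  -- range is closed
  have hclosedrange : IsClosed ((LinearMap.range Lm : Submodule ℂ H) : Set H) := by
    rw [← isSeqClosed_iff_isClosed]
    intro fn f hfn hf
    simp only [SetLike.mem_coe, LinearMap.mem_range] at hfn
    choose vn hvn using hfn
    have hfc : CauchySeq fn := hf.cauchySeq
    have hvc : CauchySeq (fun n => (vn n : H)) := by
      rw [Metric.cauchySeq_iff] at hfc ⊢
      intro ε hε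
      obtain ⟨N, hN⟩ := hfc (ε / K) (by positivity)
      refine ⟨N, fun m hm n hn => ?_⟩
      have hsub : Lm (vn m - vn n) = fn m - fn n := by rw [map_sub, hvn, hvn]
      have hd := hb (vn m - vn n) _ hsub
      have hco : ((vn m - vn n : A.domain) : H) = (vn m : H) - vn n := rfl
      rw [hco] at hd
      rw [dist_eq_norm]
      calc ‖(vn m : H) - (vn n : H)‖ ≤ K * ‖fn m - fn n‖ := hd
        _ < K * (ε / K) := by
            refine mul_lt_mul_of_pos_left ?_ hKpos
            rw [← dist_eq_norm]; exact hN m hm n hn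
        _ = ε := by field_simp
    obtain ⟨vinf, hvi⟩ := cauchySeq_tendsto_of_complete hvc
    set w : H := f - lam ^ 2 • vinf - lam • B vinf with hw
    have h1 : ∀ n, A (vn n) = fn n - lam ^ 2 • (vn n : H) - lam • B (vn n : H) := by
      intro n
      rw [← hvn n, hLmApply]
      abel
    have hAv : Filter.Tendsto (fun n => A (vn n)) Filter.atTop (nhds w) := by
      rw [funext h1]
      exact (hf.sub (hvi.const_smul _)).sub (((B.continuous.tendsto vinf).comp hvi).const_smul lam)
    have hmem : (vinf, w) ∈ A.graph :=
      hAclosed.mem_of_tendsto (hvi.prodMk_nhds hAv)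
        (Filter.Eventually.of_forall fun n => A.mem_graph (vn n))
    rw [LinearPMap.mem_graph_iff] at hmem
    obtain ⟨x, hx1, hx2⟩ := hmem
    refine SetLike.mem_coe.mpr (LinearMap.mem_range.mpr ⟨x, ?_⟩)
    rw [hLmApply, hx1, hx2, hw]
    module
  -- orthogonal complement of the range is trivial
  have hdenserange : ((LinearMap.range Lm : Submodule ℂ H))ᗮ = ⊥ := by
    rw [Submodule.eq_bot_iff]
    intro f hforth
    have h0 : ∀ v : A.domain, ⟪Lm v, f⟫ = (0 : ℂ) := fun v =>
      (Submodule.mem_orthogonal _ f).mp hforth (Lm v) (LinearMap.mem_range_self _ v)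
    set g : H := -((starRingEnd ℂ) lam ^ 2) • f - ((starRingEnd ℂ) lam) • B f with hg
    have hgx : ∀ x : A.domain, ⟪g, (x : H)⟫ = ⟪f, A x⟫ := by
      intro x
      have h1 := h0 x
      rw [hLmApply, inner_add_left, inner_add_left, inner_smul_left, inner_smul_left] at h1
      have h2 : ⟪A x, f⟫ = -((starRingEnd ℂ) (lam ^ 2) * ⟪(x : H), f⟫)
          - (starRingEnd ℂ) lam * ⟪B (x : H), f⟫ := by linear_combination h1
      have h3 : ⟪f, A x⟫ = (starRingEnd ℂ) ⟪A x, f⟫ := (inner_conj_symm _ _).symm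
      rw [h3, h2]
      simp only [hg, inner_sub_left, inner_smul_left, map_neg, map_sub, map_mul, map_pow,
        Complex.conj_conj, inner_conj_symm]
      rw [hBsym f (x : H)]
      ring
    have hfd : f ∈ (LinearPMap.adjoint A).domain :=
      LinearPMap.mem_adjoint_domain_of_exists (T := A) f ⟨g, hgx⟩
    have hfd' : f ∈ A.domain := by
      rw [← congrArg LinearPMap.domain hAeq]; exact hfd
    have hAf : A ⟨f, hfd'⟩ = g := by
      rw [← pmap_congr_aux hAeq ⟨f, hfd⟩ hfd']
      exact LinearPMap.adjoint_apply_eq hdense ⟨f, hfd⟩ hgx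
    have hz : ((starRingEnd ℂ) lam) ^ 2 • ((⟨f, hfd'⟩ : A.domain) : H)
        + (starRingEnd ℂ) lam • B ((⟨f, hfd'⟩ : A.domain) : H) + A ⟨f, hfd'⟩ = 0 := by
      rw [hAf, hg]
      module
    have hre' : -(c/4) < ((starRingEnd ℂ) lam).re := by simpa using hre
    have him' : ((starRingEnd ℂ) lam).im ≠ 0 := by simpa using him
    have := hbound ((starRingEnd ℂ) lam) hre' him' ⟨f, hfd'⟩ 0 hz
    simpa using this
  have hrange : (LinearMap.range Lm : Submodule ℂ H) = ⊤ := by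
    have h1 := Submodule.topologicalClosure_eq_top_iff.mpr hdenserange
    rwa [hclosedrange.submodule_topologicalClosure_eq] at h1
  have hsurj : Function.Surjective (fun v : A.domain => lam ^ 2 • (v : H) + lam • B (v : H) + A v) := by
    intro f
    have : f ∈ (LinearMap.range Lm : Submodule ℂ H) := hrange ▸ Submodule.mem_top
    obtain ⟨v, hv⟩ := this
    exact ⟨v, hv⟩
  exact ⟨⟨hinj, hsurj⟩, fun f v hv => hbound lam hre him v f hv⟩
end

section
/- There exists a constant C > 0 such that for every λ ∈ ℂ with Re λ > |Im λ|, the map v ↦ λ²v + λ(Bv) + Av is a bijection from the domain D(A) onto H, and its inverse R(λ) satisfies ‖R(λ)f‖ ≤ C·(Re λ)⁻¹·‖f‖ for all f ∈ H. -/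
open scoped ComplexInnerProductSpace

/-- There exists `C > 0` such that for every `λ ∈ ℂ` with
`Re λ > |Im λ|`, the map `v ↦ λ²v + λ(Bv) + Av` is a bijection from `D(A)`
onto `H`, and its inverse `R(λ)` satisfies `‖R(λ)f‖ ≤ C·(Re λ)⁻¹·‖f‖`. -/
theorem stmt2
    {H : Type*} [NormedAddCommGroup H] [InnerProductSpace ℂ H] [CompleteSpace H]
    (A : H →ₗ.[ℂ] H) (hA_sa : IsSelfAdjoint A)
    (hA_pos : ∀ u : A.domain, u ≠ 0 → 0 < (⟪A u, (u : H)⟫).re)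
    (B : H →L[ℂ] H) (hB_sa : IsSelfAdjoint B)
    (c : ℝ) (hc : 0 < c)
    (hB_pos : ∀ u : H, c * ‖u‖ ^ 2 ≤ (⟪B u, u⟫).re) :
    ∃ C > (0:ℝ), ∀ lam : ℂ, |lam.im| < lam.re →
      Function.Bijective (fun v : A.domain => lam ^ 2 • (v : H) + lam • B (v : H) + A v) ∧
      ∀ (f : H) (v : A.domain),
        lam ^ 2 • (v : H) + lam • B (v : H) + A v = f →
        ‖(v : H)‖ ≤ C * (lam.re)⁻¹ * ‖f‖ := by
  have hA_sa' : A.adjoint = A := hA_sa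
  obtain ⟨hdom, hfun⟩ := LinearPMap.ext_iff.mp hA_sa'
  have hdense : Dense (A.domain : Set H) := hA_sa.dense_domain
  -- symmetry of A
  have hsym : ∀ x y : A.domain, ⟪A x, (y:H)⟫ = ⟪(x:H), A y⟫ := by
    intro x y
    have h2 : A.adjoint ⟨(x:H), hdom.symm ▸ x.2⟩ = A x := @hfun _ _ _
    have h1 := LinearPMap.adjoint_isFormalAdjoint hdense ⟨(x:H), hdom.symm ▸ x.2⟩ y
    rw [h2] at h1
    exact h1
  -- symmetry of B
  have hBsym : ∀ x y : H, ⟪B x, y⟫ = ⟪x, B y⟫ := fun x y => hB_sa.isSymmetric x y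
  have hB_im : ∀ u : H, (⟪B u, u⟫).im = 0 := by
    intro u
    have h1 : (starRingEnd ℂ) ⟪B u, u⟫ = ⟪B u, u⟫ := by
      rw [inner_conj_symm]
      exact (hBsym u u).symm
    exact Complex.conj_eq_iff_im.mp h1
  have hA_nonneg : ∀ u : A.domain, 0 ≤ (⟪A u, (u:H)⟫).re := by
    intro u
    rcases eq_or_ne u 0 with h | h
    · simp [h]
    · exact (hA_pos u h).le
  -- THE KEY ESTIMATE
  have norm_bound : ∀ lam : ℂ, |lam.im| < lam.re → ∀ v : A.domain,
      ‖(v:H)‖ ≤ (c * lam.re)⁻¹ * ‖lam ^ 2 • (v:H) + lam • B (v:H) + A v‖ := by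
    intro lam hlam v
    have hmu : 0 < lam.re := (abs_nonneg _).trans_lt hlam
    set w := lam ^ 2 • (v:H) + lam • B (v:H) + A v with hw
    have hinner : ⟪w, (v:H)⟫ = (starRingEnd ℂ) (lam^2) * ((‖(v:H)‖:ℂ))^2
        + (starRingEnd ℂ) lam * ⟪B (v:H), (v:H)⟫ + ⟪A v, (v:H)⟫ := by
      rw [hw, inner_add_left, inner_add_left, inner_smul_left, inner_smul_left,
        inner_self_eq_norm_sq_to_K]
      rfl
    have hre : c * lam.re * ‖(v:H)‖^2 ≤ (⟪w, (v:H)⟫).re := by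
      have hb := hB_pos (v:H)
      have hbim := hB_im (v:H)
      have had := hA_nonneg v
      have hnu : lam.im^2 ≤ lam.re^2 := by nlinarith [abs_nonneg lam.im, sq_abs lam.im]
      have hre2 : (⟪w, (v:H)⟫).re = ((lam.re^2 - lam.im^2)) * ‖(v:H)‖^2
          + lam.re * (⟪B (v:H), (v:H)⟫).re + lam.im * (⟪B (v:H), (v:H)⟫).im
          + (⟪A v, (v:H)⟫).re := by
        rw [hinner]
        simp [Complex.add_re, Complex.mul_re, Complex.conj_re, Complex.conj_im,
          pow_two, Complex.mul_im, ← Complex.ofReal_pow]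
        ring
      rw [hre2, hbim]
      nlinarith [norm_nonneg ((v:H)), sq_nonneg ‖(v:H)‖]
    have hcs : (⟪w, (v:H)⟫).re ≤ ‖w‖ * ‖(v:H)‖ := re_inner_le_norm (𝕜 := ℂ) w (v:H)
    have h3 : c * lam.re * ‖(v:H)‖^2 ≤ ‖w‖ * ‖(v:H)‖ := hre.trans hcs
    by_cases hv : (v:H) = 0
    · simp only [hv, norm_zero]
      positivity
    · have hvpos : 0 < ‖(v:H)‖ := norm_pos_iff.mpr hv
      have hcp : 0 < c * lam.re := mul_pos hc hmu
      have h4 : c * lam.re * ‖(v:H)‖ ≤ ‖w‖ := by nlinarith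
      calc ‖(v:H)‖ = (c * lam.re)⁻¹ * (c * lam.re * ‖(v:H)‖) := by field_simp
        _ ≤ (c * lam.re)⁻¹ * ‖w‖ := by
            exact mul_le_mul_of_nonneg_left h4 (inv_nonneg.mpr hcp.le)
  refine ⟨c⁻¹, inv_pos.mpr hc, ?_⟩
  intro lam hlam
  have hmu : 0 < lam.re := (abs_nonneg _).trans_lt hlam
  set S : A.domain →ₗ[ℂ] H :=
    lam ^ 2 • A.domain.subtype + lam • ((B : H →ₗ[ℂ] H).comp A.domain.subtype) + A.toFun with hSdef
  have hSapp : ∀ v : A.domain, S v = lam ^ 2 • (v:H) + lam • B (v:H) + A v := fun v => rfl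
  have hSbound : ∀ v : A.domain, ‖(v:H)‖ ≤ (c * lam.re)⁻¹ * ‖S v‖ := by
    intro v; rw [hSapp]; exact norm_bound lam hlam v
  -- range of S is closed
  have hKclosed : IsClosed ((LinearMap.range S : Submodule ℂ H) : Set H) := by
    apply IsSeqClosed.isClosed
    intro x p hx hxp
    choose v hv using hx
    have hcp : 0 < c * lam.re := mul_pos hc hmu
    have hvC : CauchySeq (fun n => ((v n : H))) := by
      rw [Metric.cauchySeq_iff]
      intro ε hε
      have hxC := hxp.cauchySeq
      rw [Metric.cauchySeq_iff] at hxC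
      obtain ⟨N, hN⟩ := hxC (ε * (c * lam.re)) (by positivity)
      refine ⟨N, fun m hm n hn => ?_⟩
      have h1 : ‖((v m - v n : A.domain) : H)‖ ≤ (c * lam.re)⁻¹ * ‖S (v m - v n)‖ :=
        hSbound _
      have h2 : S (v m - v n) = x m - x n := by rw [map_sub, hv, hv]
      have h5 := hN m hm n hn
      rw [dist_eq_norm] at h5 ⊢
      have h6 : ‖(v m : H) - (v n : H)‖ ≤ (c * lam.re)⁻¹ * ‖x m - x n‖ := by
        rw [h2] at h1
        simpa using h1
      calc ‖(v m : H) - (v n : H)‖ ≤ (c * lam.re)⁻¹ * ‖x m - x n‖ := h6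
        _ < (c * lam.re)⁻¹ * (ε * (c * lam.re)) := by
            apply mul_lt_mul_of_pos_left h5 (inv_pos.mpr hcp)
        _ = ε := by field_simp
    obtain ⟨u, hu⟩ := cauchySeq_tendsto_of_complete hvC
    have hAv : ∀ n, A (v n) = x n - lam ^ 2 • ((v n : H)) - lam • B ((v n : H)) := by
      intro n
      have h := hv n
      rw [hSapp] at h
      rw [← h]; abel
    have hBt : Filter.Tendsto (fun n => B ((v n : H))) Filter.atTop (nhds (B u)) :=
      (B.continuous.tendsto u).comp hu
    have hAt : Filter.Tendsto (fun n => A (v n)) Filter.atTop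
        (nhds (p - lam ^ 2 • u - lam • B u)) := by
      simp only [hAv]
      exact (hxp.sub (hu.const_smul _)).sub (hBt.const_smul _)
    set y := p - lam ^ 2 • u - lam • B u with hy
    have hyu : ∀ w : A.domain, ⟪y, (w:H)⟫ = ⟪u, A w⟫ := by
      intro w
      have h1 : Filter.Tendsto (fun n => (⟪A (v n), (w:H)⟫ : ℂ)) Filter.atTop
          (nhds ⟪y, (w:H)⟫) := hAt.inner tendsto_const_nhds
      have h3 : Filter.Tendsto (fun n => (⟪((v n : H)), A w⟫ : ℂ)) Filter.atTop
          (nhds ⟪u, A w⟫) := hu.inner tendsto_const_nhds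
      have h2 : ∀ n, (⟪A (v n), (w:H)⟫ : ℂ) = ⟪((v n : H)), A w⟫ := fun n => hsym _ _
      exact tendsto_nhds_unique (by simpa only [h2] using h1) h3
    have humem : u ∈ A.adjoint.domain :=
      LinearPMap.mem_adjoint_domain_of_exists u ⟨y, fun x => hyu x⟩
    have humem' : u ∈ A.domain := hdom ▸ humem
    have hAu : A ⟨u, humem'⟩ = y := by
      have h1 : A.adjoint ⟨u, humem⟩ = y :=
        LinearPMap.adjoint_apply_eq hdense _ (fun x => hyu x)
      have h2 : A.adjoint ⟨u, humem⟩ = A ⟨u, humem'⟩ := @hfun _ _ _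
      rw [← h2, h1]
    refine ⟨⟨u, humem'⟩, ?_⟩
    rw [hSapp, hAu, hy]
    push_cast
    abel
  -- orthogonal complement of range is trivial
  have horth : (LinearMap.range S)ᗮ = ⊥ := by
    rw [Submodule.eq_bot_iff]
    intro f hf
    rw [Submodule.mem_orthogonal] at hf
    set lam' := (starRingEnd ℂ) lam with hlamconj
    have hlam'' : |lam'.im| < lam'.re := by
      simpa [hlamconj, abs_neg] using hlam
    set w := -(lam' ^ 2 • f + lam' • B f) with hwdef
    have hfw : ∀ x : A.domain, ⟪w, (x:H)⟫ = ⟪f, A x⟫ := by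
      intro x
      have h0 : (⟪S x, f⟫ : ℂ) = 0 := hf _ (LinearMap.mem_range_self S x)
      rw [hSapp, inner_add_left, inner_add_left, inner_smul_left, inner_smul_left] at h0
      have h0' : (⟪A x, f⟫ : ℂ) =
          -((starRingEnd ℂ) (lam ^ 2) * ⟪(x:H), f⟫ + (starRingEnd ℂ) lam * ⟪B (x:H), f⟫) := by
        linear_combination h0
      have h1 : (⟪f, A x⟫ : ℂ) = -(lam ^ 2 * ⟪f, (x:H)⟫ + lam * ⟪f, B (x:H)⟫) := by
        have := congrArg (starRingEnd ℂ) h0'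
        simpa [inner_conj_symm, map_pow] using this
      rw [h1, hwdef, inner_neg_left, inner_add_left, inner_smul_left, inner_smul_left,
        hlamconj]
      rw [← hBsym f (x:H)]
      simp [map_pow]
    have hfd : f ∈ A.adjoint.domain :=
      LinearPMap.mem_adjoint_domain_of_exists f ⟨w, hfw⟩
    have hfd' : f ∈ A.domain := hdom ▸ hfd
    have hAf : A ⟨f, hfd'⟩ = w := by
      have h1 : A.adjoint ⟨f, hfd⟩ = w := LinearPMap.adjoint_apply_eq hdense _ hfw
      have h2 : A.adjoint ⟨f, hfd⟩ = A ⟨f, hfd'⟩ := @hfun _ _ _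
      rw [← h2, h1]
    have hzero : lam' ^ 2 • ((⟨f, hfd'⟩ : A.domain) : H) + lam' • B ((⟨f, hfd'⟩ : A.domain) : H)
        + A ⟨f, hfd'⟩ = 0 := by
      rw [hAf, hwdef]
      push_cast
      abel
    have hb := norm_bound lam' hlam'' ⟨f, hfd'⟩
    rw [hzero] at hb
    simp only [norm_zero, mul_zero] at hb
    exact norm_le_zero_iff.mp hb
  haveI := hKclosed.completeSpace_coe
  have hKtop : LinearMap.range S = ⊤ := Submodule.orthogonal_eq_bot_iff.mp horth
  refine ⟨⟨?_, ?_⟩, ?_⟩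
  · intro a b hab
    simp only at hab
    have hS : S (a - b) = 0 := by
      rw [map_sub, hSapp, hSapp, hab, sub_self]
    have hnb := hSbound (a - b)
    rw [hS] at hnb
    simp only [norm_zero, mul_zero] at hnb
    have h7 : ((a - b : A.domain) : H) = 0 := norm_le_zero_iff.mp hnb
    have : a - b = 0 := by exact_mod_cast h7
    exact sub_eq_zero.mp this
  · intro f
    have hmem : f ∈ LinearMap.range S := hKtop ▸ Submodule.mem_top
    obtain ⟨v, hv⟩ := hmem
    exact ⟨v, hv⟩
  · intro f v hvf
    have h := norm_bound lam hlam v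
    rw [hvf] at h
    calc ‖(v:H)‖ ≤ (c * lam.re)⁻¹ * ‖f‖ := h
      _ = c⁻¹ * lam.re⁻¹ * ‖f‖ := by rw [mul_inv]
end

section
/- There exists a constant C > 0 such that for every strong solution u of the abstract damped wave equation with u(0) ∈ D(A), and every t > 1, one has re⟪Au(t), u(t)⟫ + ‖u'(t)‖² ≤ C·t⁻¹·(‖u(0)‖² + re⟪Au(0), u(0)⟫ + ‖u'(0)‖²). -/
open scoped ComplexInnerProductSpace
open Set Filter Topology

section aux

variable {H : Type*} [NormedAddCommGroup H] [InnerProductSpace ℂ H]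

/-- real part of the complex inner product -/
noncomputable def rIn (x y : H) : ℝ := (⟪x, y⟫).re

lemma rIn_symm (x y : H) : rIn x y = rIn y x := by
  rw [rIn, rIn, ← inner_conj_symm]
  exact (Complex.conj_re _)

lemma rIn_add_left (x y z : H) : rIn (x + y) z = rIn x z + rIn y z := by
  simp [rIn, inner_add_left]

lemma rIn_neg_left (x y : H) : rIn (-x) y = - rIn x y := by
  simp [rIn, inner_neg_left]

lemma rIn_smul_right (x y : H) (r : ℝ) : rIn x (r • y) = r * rIn x y := by
  rw [rIn, RCLike.real_smul_eq_coe_smul (K := ℂ), inner_smul_right]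
  simp [rIn]

lemma rIn_self (x : H) : rIn x x = ‖x‖ ^ 2 := by
  have := @inner_self_eq_norm_sq ℂ _ _ _ _ x
  simpa [rIn] using this

lemma abs_rIn_le (x y : H) : |rIn x y| ≤ ‖x‖ * ‖y‖ := by
  refine le_trans ?_ (norm_inner_le_norm (𝕜 := ℂ) x y)
  exact Complex.abs_re_le_norm _

lemma HasDerivWithinAt.rIn {f g : ℝ → H} {f' g' : H} {s : Set ℝ} {x : ℝ}
    (hf : HasDerivWithinAt f f' s x) (hg : HasDerivWithinAt g g' s x) :
    HasDerivWithinAt (fun t => rIn (f t) (g t)) (rIn (f x) g' + rIn f' (g x)) s x := by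
  have h := hf.inner ℂ hg
  have := (Complex.reCLM.hasFDerivAt (x := ⟪f x, g x⟫)).comp_hasDerivWithinAt x h
  simpa [Function.comp_def, _root_.rIn] using this

lemma antitoneOn_aux {f : ℝ → ℝ}
    (h : ∀ t ∈ Ici (0:ℝ), ∃ d ≤ (0:ℝ), HasDerivWithinAt f d (Ici 0) t) :
    AntitoneOn f (Ici 0) := by
  apply antitoneOn_of_deriv_nonpos (convex_Ici 0)
  · intro t ht
    obtain ⟨d, _, hd⟩ := h t ht
    exact hd.continuousWithinAt
  · intro t ht
    rw [interior_Ici] at ht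
    obtain ⟨d, _, hd⟩ := h t (mem_Ici.mpr (mem_Ioi.mp ht).le)
    exact ((hd.hasDerivAt (Ici_mem_nhds ht)).differentiableAt).differentiableWithinAt
  · intro t ht
    rw [interior_Ici] at ht
    obtain ⟨d, hd0, hd⟩ := h t (mem_Ici.mpr (mem_Ioi.mp ht).le)
    rwa [(hd.hasDerivAt (Ici_mem_nhds ht)).deriv]

/-- key derivative lemma via the self-adjointness symmetry trick -/
lemma key_deriv {w u : ℝ → H} {v : ℝ → H}
    (hsym : ∀ s ∈ Ici (0:ℝ), ∀ r ∈ Ici (0:ℝ), rIn (w s) (u r) = rIn (w r) (u s))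
    (hw : ContinuousOn w (Ici 0))
    (hu : ∀ s ∈ Ici (0:ℝ), HasDerivWithinAt u (v s) (Ici 0) s)
    {t : ℝ} (ht : t ∈ Ici (0:ℝ)) :
    HasDerivWithinAt (fun s => rIn (w s) (u s)) (2 * rIn (w t) (v t)) (Ici 0) t := by
  rw [hasDerivWithinAt_iff_tendsto_slope]
  have h1 : Tendsto (slope u t) (𝓝[Ici 0 \ {t}] t) (𝓝 (v t)) :=
    hasDerivWithinAt_iff_tendsto_slope.mp (hu t ht)
  have h2 : Tendsto w (𝓝[Ici 0 \ {t}] t) (𝓝 (w t)) :=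
    ((hw t ht).mono diff_subset).tendsto
  have h3 : Tendsto (fun s => rIn (w s + w t) (slope u t s)) (𝓝[Ici 0 \ {t}] t)
      (𝓝 (rIn (w t + w t) (v t))) := by
    have hC : Tendsto (fun s => (⟪w s + w t, slope u t s⟫ : ℂ)) (𝓝[Ici 0 \ {t}] t)
        (𝓝 (⟪w t + w t, v t⟫ : ℂ)) :=
      Filter.Tendsto.inner (𝕜 := ℂ) (h2.add tendsto_const_nhds) h1
    exact (Complex.continuous_re.tendsto _).comp hC
  have heq : rIn (w t + w t) (v t) = 2 * rIn (w t) (v t) := by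
    simp [rIn, inner_add_left]; ring
  rw [heq] at h3
  refine h3.congr' ?_
  filter_upwards [self_mem_nhdsWithin] with s hs
  obtain ⟨hs0, hst⟩ := hs
  have hst' : s - t ≠ 0 := sub_ne_zero.mpr hst
  have hexp : rIn (w s) (u s) - rIn (w t) (u t) = rIn (w s + w t) (u s - u t) := by
    have h := hsym s hs0 t ht
    simp only [rIn, inner_add_left, inner_sub_right] at *
    simp only [Complex.add_re, Complex.sub_re]
    linarith
  rw [slope_def_field]
  simp only [slope, vsub_eq_sub]
  rw [rIn_smul_right, ← hexp, div_eq_inv_mul]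

end aux

/-- A strong solution of the abstract damped wave equation `u'' + Au + Bu' = 0` on `[0,∞)`:
a twice continuously differentiable map `u : [0,∞) → H` with `u(t) ∈ D(A)`,
`t ↦ Au(t)` continuous, and the equation satisfied for all `t ≥ 0`. -/
structure DampedWaveSolution
    {H : Type*} [NormedAddCommGroup H] [InnerProductSpace ℂ H] [CompleteSpace H]
    (A : H →ₗ.[ℂ] H) (B : H →L[ℂ] H) where
  u : ℝ → H
  du : ℝ → H
  ddu : ℝ → H
  Au : ℝ → H
  mem : ∀ t : ℝ, 0 ≤ t → u t ∈ A.domain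
  hAu : ∀ (t : ℝ) (ht : 0 ≤ t), A ⟨u t, mem t ht⟩ = Au t
  hdu : ∀ t : ℝ, 0 ≤ t → HasDerivWithinAt u (du t) (Set.Ici 0) t
  hddu : ∀ t : ℝ, 0 ≤ t → HasDerivWithinAt du (ddu t) (Set.Ici 0) t
  cont_ddu : ContinuousOn ddu (Set.Ici 0)
  cont_Au : ContinuousOn Au (Set.Ici 0)
  eqn : ∀ t : ℝ, 0 ≤ t → ddu t + Au t + B (du t) = 0

set_option maxHeartbeats 4000000 in
/-- abstract energy decay
`re⟪Au(t), u(t)⟫ + ‖u'(t)‖² ≤ C·t⁻¹·(‖u(0)‖² + re⟪Au(0), u(0)⟫ + ‖u'(0)‖²)` for `t > 1`. -/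
theorem stmt4
    {H : Type*} [NormedAddCommGroup H] [InnerProductSpace ℂ H] [CompleteSpace H]
    (A : H →ₗ.[ℂ] H) (hA_sa : IsSelfAdjoint A)
    (hA_pos : ∀ u : A.domain, u ≠ 0 → 0 < (⟪A u, (u : H)⟫).re)
    (B : H →L[ℂ] H) (hB_sa : IsSelfAdjoint B)
    (c : ℝ) (hc : 0 < c)
    (hB_pos : ∀ u : H, c * ‖u‖ ^ 2 ≤ (⟪B u, u⟫).re) :
    ∃ C > (0:ℝ), ∀ sol : DampedWaveSolution A B, ∀ t : ℝ, 1 < t →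
      (⟪sol.Au t, sol.u t⟫).re + ‖sol.du t‖ ^ 2 ≤
        C * t⁻¹ * (‖sol.u 0‖ ^ 2 + (⟪sol.Au 0, sol.u 0⟫).re + ‖sol.du 0‖ ^ 2) := by
  have hβ : (0:ℝ) ≤ ‖B‖ := norm_nonneg B
  refine ⟨(2 + 3*c + 2*c^2 + c*‖B‖ + c^2*‖B‖)/c^2, by positivity, ?_⟩
  intro sol t htt
  have ht : (0:ℝ) ≤ t := by linarith
  have htI : t ∈ Ici (0:ℝ) := ht
  have h0I : (0:ℝ) ∈ Ici (0:ℝ) := self_mem_Ici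
  -- symmetry of A
  have hAsym : A.IsFormalAdjoint A := by
    have h := LinearPMap.adjoint_isFormalAdjoint (hA_sa.dense_domain)
    rwa [LinearPMap.isSelfAdjoint_def.mp hA_sa] at h
  have hsym : ∀ s ∈ Ici (0:ℝ), ∀ r ∈ Ici (0:ℝ),
      rIn (sol.Au s) (sol.u r) = rIn (sol.Au r) (sol.u s) := by
    intro s hs r hr
    have h1 : (⟪sol.Au s, sol.u r⟫ : ℂ) = ⟪sol.u s, sol.Au r⟫ := by
      have h := hAsym ⟨sol.u s, sol.mem s hs⟩ ⟨sol.u r, sol.mem r hr⟩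
      rwa [sol.hAu s hs, sol.hAu r hr] at h
    rw [rIn, h1]
    exact rIn_symm _ _
  -- symmetry of B
  have hBsym : ∀ x y : H, rIn (B x) y = rIn (B y) x := by
    intro x y
    have h : (⟪B x, y⟫ : ℂ) = ⟪x, B y⟫ := hB_sa.isSymmetric x y
    rw [rIn, h]
    exact rIn_symm _ _
  have hBlow : ∀ x : H, c * ‖x‖ ^ 2 ≤ rIn (B x) x := hB_pos
  have hBup : ∀ x : H, rIn (B x) x ≤ ‖B‖ * ‖x‖ ^ 2 := by
    intro x
    have h1 : rIn (B x) x ≤ ‖B x‖ * ‖x‖ :=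
      le_trans (le_abs_self _) (abs_rIn_le _ _)
    have h2 : ‖B x‖ ≤ ‖B‖ * ‖x‖ := B.le_opNorm x
    nlinarith [norm_nonneg x, norm_nonneg (B x)]
  -- positivity of A
  have hApos : ∀ s ∈ Ici (0:ℝ), 0 ≤ rIn (sol.Au s) (sol.u s) := by
    intro s hs
    rcases eq_or_ne (⟨sol.u s, sol.mem s hs⟩ : A.domain) 0 with h0 | h0
    · have hz : sol.Au s = 0 := by rw [← sol.hAu s hs, h0]; exact map_zero _
      simp [rIn, hz]
    · have h := hA_pos _ h0
      rw [sol.hAu s hs] at h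
      exact le_of_lt h
  -- derivative facts
  have hv : ∀ s ∈ Ici (0:ℝ), HasDerivWithinAt sol.u (sol.du s) (Ici 0) s :=
    fun s hs => sol.hdu s hs
  have hdd : ∀ s ∈ Ici (0:ℝ), HasDerivWithinAt sol.du (sol.ddu s) (Ici 0) s :=
    fun s hs => sol.hddu s hs
  have heqn : ∀ s ∈ Ici (0:ℝ), sol.ddu s = -(sol.Au s + B (sol.du s)) := by
    intro s hs
    have h := sol.eqn s hs
    rw [eq_neg_iff_add_eq_zero, ← add_assoc]
    exact h
  -- the three monotone functionals
  have hE' : ∀ s ∈ Ici (0:ℝ),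
      HasDerivWithinAt (fun r => rIn (sol.Au r) (sol.u r) + rIn (sol.du r) (sol.du r))
        (-2 * rIn (B (sol.du s)) (sol.du s)) (Ici 0) s := by
    intro s hs
    have d1 := key_deriv hsym sol.cont_Au hv hs
    have d2 := HasDerivWithinAt.rIn (hdd s hs) (hdd s hs)
    have d3 := d1.add d2
    refine d3.congr_deriv ?_
    rw [heqn s hs, rIn_neg_left, rIn_add_left, rIn_symm (sol.du s) (-(sol.Au s + B (sol.du s))),
      rIn_neg_left, rIn_add_left, rIn_symm (sol.Au s) (sol.du s)]
    ring
  have hX' : ∀ s ∈ Ici (0:ℝ),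
      HasDerivWithinAt (fun r => rIn (sol.du r) (sol.u r))
        (rIn (sol.du s) (sol.du s) + rIn (sol.ddu s) (sol.u s)) (Ici 0) s :=
    fun s hs => HasDerivWithinAt.rIn (hdd s hs) (hv s hs)
  have hY' : ∀ s ∈ Ici (0:ℝ),
      HasDerivWithinAt (fun r => rIn (B (sol.u r)) (sol.u r))
        (rIn (B (sol.u s)) (sol.du s) + rIn (B (sol.du s)) (sol.u s)) (Ici 0) s := by
    intro s hs
    have hBu : HasDerivWithinAt (fun r => B (sol.u r)) (B (sol.du s)) (Ici 0) s := by
      simpa [Function.comp_def] using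
        ((B.restrictScalars ℝ).hasFDerivAt (x := sol.u s)).comp_hasDerivWithinAt s (hv s hs)
    exact HasDerivWithinAt.rIn hBu (hv s hs)
  -- expansion of rIn (ddu) (u)
  have hddu_u : ∀ s ∈ Ici (0:ℝ), rIn (sol.ddu s) (sol.u s) =
      -(rIn (sol.Au s) (sol.u s)) - rIn (B (sol.u s)) (sol.du s) := by
    intro s hs
    rw [heqn s hs, rIn_neg_left, rIn_add_left, hBsym (sol.du s) (sol.u s)]
    ring
  -- E antitone
  have hEmono : AntitoneOn
      (fun r => rIn (sol.Au r) (sol.u r) + rIn (sol.du r) (sol.du r)) (Ici 0) := by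
    apply antitoneOn_aux
    intro s hs
    refine ⟨_, ?_, hE' s hs⟩
    nlinarith [hBlow (sol.du s), mul_nonneg hc.le (sq_nonneg ‖sol.du s‖)]
  -- Φ antitone (scaled by c to keep everything polynomial in c)
  have hΦmono : AntitoneOn
      (fun r => c * (r * (rIn (sol.Au r) (sol.u r) + rIn (sol.du r) (sol.du r)))
        + c * rIn (sol.du r) (sol.u r) + (c/2) * rIn (B (sol.u r)) (sol.u r)
        + (rIn (sol.Au r) (sol.u r) + rIn (sol.du r) (sol.du r))) (Ici 0) := by
    apply antitoneOn_aux
    intro s hs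
    refine ⟨_, ?_, (((((hasDerivWithinAt_id s (Ici 0)).mul (hE' s hs)).const_mul c).add
      ((hX' s hs).const_mul c)).add ((hY' s hs).const_mul (c/2))).add (hE' s hs)⟩
    rw [id, hddu_u s hs, rIn_self (sol.du s), hBsym (sol.du s) (sol.u s)]
    have hb := hBlow (sol.du s)
    have hQ0 : 0 ≤ rIn (B (sol.du s)) (sol.du s) := by
      nlinarith [mul_nonneg hc.le (sq_nonneg ‖sol.du s‖)]
    nlinarith [mul_nonneg (mul_nonneg hc.le hs) hQ0]
  -- M antitone
  have hMmono : AntitoneOn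
      (fun r => (rIn (sol.Au r) (sol.u r) + rIn (sol.du r) (sol.du r))
        + c * rIn (sol.du r) (sol.u r) + (c/2) * rIn (B (sol.u r)) (sol.u r)) (Ici 0) := by
    apply antitoneOn_aux
    intro s hs
    refine ⟨_, ?_, ((hE' s hs).add ((hX' s hs).const_mul c)).add
      ((hY' s hs).const_mul (c/2))⟩
    rw [hddu_u s hs, rIn_self (sol.du s), hBsym (sol.du s) (sol.u s)]
    have hb := hBlow (sol.du s)
    have hP := hApos s hs
    nlinarith [mul_nonneg hc.le (sq_nonneg ‖sol.du s‖)]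
  -- consequences of monotonicity
  have hb2t : rIn (sol.du t) (sol.du t) = ‖sol.du t‖ ^ 2 := rIn_self _
  have hb20 : rIn (sol.du 0) (sol.du 0) = ‖sol.du 0‖ ^ 2 := rIn_self _
  have hEt := hEmono h0I htI ht
  have hΦt := hΦmono h0I htI ht
  have hMt := hMmono h0I htI ht
  simp only [hb2t, hb20] at hEt hΦt hMt
  have hPt := hApos t htI
  have hP0 := hApos 0 h0I
  have hXt := abs_le.mp (abs_rIn_le (sol.du t) (sol.u t))
  have hX0 := abs_le.mp (abs_rIn_le (sol.du 0) (sol.u 0))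
  have hYtl := hBlow (sol.u t)
  have hY0u := hBup (sol.u 0)
  have hc2 : (0:ℝ) ≤ c^2 := sq_nonneg c
  have hD0 : 0 ≤ ‖sol.u 0‖ ^ 2 + rIn (sol.Au 0) (sol.u 0) + ‖sol.du 0‖ ^ 2 := by
    have := sq_nonneg ‖sol.u 0‖; have := sq_nonneg ‖sol.du 0‖; linarith
  -- M functional: lower bound at t, upper bound at 0
  have hMlow : c^2/4 * ‖sol.u t‖ ^ 2 ≤
      rIn (sol.Au t) (sol.u t) + ‖sol.du t‖ ^ 2 + c * rIn (sol.du t) (sol.u t)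
        + (c/2) * rIn (B (sol.u t)) (sol.u t) := by
    nlinarith [hPt, mul_le_mul_of_nonneg_left hXt.1 hc.le,
      mul_le_mul_of_nonneg_left hYtl (by positivity : (0:ℝ) ≤ c/2),
      sq_nonneg (‖sol.du t‖ - c/2 * ‖sol.u t‖)]
  have hM0a : c * rIn (sol.du 0) (sol.u 0) ≤ c/2 * ‖sol.u 0‖ ^ 2 + c/2 * ‖sol.du 0‖ ^ 2 := by
    nlinarith [mul_le_mul_of_nonneg_left hX0.2 hc.le,
      mul_nonneg hc.le (sq_nonneg (‖sol.u 0‖ - ‖sol.du 0‖))]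
  have hM0b : (c/2) * rIn (B (sol.u 0)) (sol.u 0) ≤ (c*‖B‖/2) * ‖sol.u 0‖ ^ 2 := by
    nlinarith [mul_le_mul_of_nonneg_left hY0u (by positivity : (0:ℝ) ≤ c/2)]
  have hM0up : rIn (sol.Au 0) (sol.u 0) + ‖sol.du 0‖ ^ 2 + c * rIn (sol.du 0) (sol.u 0)
        + (c/2) * rIn (B (sol.u 0)) (sol.u 0) ≤
      (1 + c + c*‖B‖/2) * (‖sol.u 0‖ ^ 2 + rIn (sol.Au 0) (sol.u 0) + ‖sol.du 0‖ ^ 2) := by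
    nlinarith [hM0a, hM0b, mul_nonneg hc.le hP0, mul_nonneg (mul_nonneg hc.le hβ) hP0,
      mul_nonneg (mul_nonneg hc.le hβ) (sq_nonneg ‖sol.du 0‖),
      mul_nonneg hc.le (sq_nonneg ‖sol.du 0‖), sq_nonneg ‖sol.u 0‖]
  have hchain : c^2/4 * ‖sol.u t‖ ^ 2 ≤
      (1 + c + c*‖B‖/2) * (‖sol.u 0‖ ^ 2 + rIn (sol.Au 0) (sol.u 0) + ‖sol.du 0‖ ^ 2) :=
    le_trans hMlow (le_trans hMt hM0up)
  have hb2D : ‖sol.du t‖ ^ 2 ≤ ‖sol.u 0‖ ^ 2 + rIn (sol.Au 0) (sol.u 0) + ‖sol.du 0‖ ^ 2 := by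
    nlinarith [hEt, hPt, sq_nonneg ‖sol.u 0‖]
  -- Φ functional gives the decay
  have hEt0 : 0 ≤ rIn (sol.Au t) (sol.u t) + ‖sol.du t‖ ^ 2 :=
    add_nonneg hPt (sq_nonneg _)
  have hTE : c * (t * (rIn (sol.Au t) (sol.u t) + ‖sol.du t‖ ^ 2)) ≤
      c * rIn (sol.du 0) (sol.u 0) + (c/2) * rIn (B (sol.u 0)) (sol.u 0)
        + (rIn (sol.Au 0) (sol.u 0) + ‖sol.du 0‖ ^ 2)
        + c * (‖sol.du t‖ * ‖sol.u t‖) := by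
    nlinarith [hΦt, mul_le_mul_of_nonneg_left hXt.1 hc.le,
      mul_le_mul_of_nonneg_left hYtl (by positivity : (0:ℝ) ≤ c/2),
      hEt0, mul_nonneg (mul_nonneg hc.le hc.le) (sq_nonneg ‖sol.u t‖)]
  have h1 : c^2 * (t * (rIn (sol.Au t) (sol.u t) + ‖sol.du t‖ ^ 2)) ≤
      c^2 * rIn (sol.du 0) (sol.u 0) + (c^2/2) * rIn (B (sol.u 0)) (sol.u 0)
        + c * (rIn (sol.Au 0) (sol.u 0) + ‖sol.du 0‖ ^ 2)
        + c^2 * (‖sol.du t‖ * ‖sol.u t‖) := by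
    nlinarith [mul_le_mul_of_nonneg_left hTE hc.le]
  have h2 : c^2 * (‖sol.du t‖ * ‖sol.u t‖) ≤ c^2/2 * ‖sol.du t‖ ^ 2 + c^2/2 * ‖sol.u t‖ ^ 2 := by
    nlinarith [mul_nonneg hc2 (sq_nonneg (‖sol.du t‖ - ‖sol.u t‖))]
  have h3 : c^2/2 * ‖sol.u t‖ ^ 2 ≤
      2 * ((1 + c + c*‖B‖/2) * (‖sol.u 0‖ ^ 2 + rIn (sol.Au 0) (sol.u 0) + ‖sol.du 0‖ ^ 2)) := by
    linarith [hchain]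
  have hX0D : rIn (sol.du 0) (sol.u 0) ≤
      ‖sol.u 0‖ ^ 2 + rIn (sol.Au 0) (sol.u 0) + ‖sol.du 0‖ ^ 2 := by
    nlinarith [hX0.2, sq_nonneg (‖sol.u 0‖ - ‖sol.du 0‖), hP0]
  have h4 : c^2/2 * ‖sol.du t‖ ^ 2 ≤
      c^2/2 * (‖sol.u 0‖ ^ 2 + rIn (sol.Au 0) (sol.u 0) + ‖sol.du 0‖ ^ 2) :=
    mul_le_mul_of_nonneg_left hb2D (by positivity)
  have h5 : c^2 * rIn (sol.du 0) (sol.u 0) ≤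
      c^2 * (‖sol.u 0‖ ^ 2 + rIn (sol.Au 0) (sol.u 0) + ‖sol.du 0‖ ^ 2) :=
    mul_le_mul_of_nonneg_left hX0D hc2
  have hY0D : rIn (B (sol.u 0)) (sol.u 0) ≤
      ‖B‖ * (‖sol.u 0‖ ^ 2 + rIn (sol.Au 0) (sol.u 0) + ‖sol.du 0‖ ^ 2) := by
    linarith [hY0u, mul_nonneg hβ hP0, mul_nonneg hβ (sq_nonneg ‖sol.du 0‖)]
  have h6 : (c^2/2) * rIn (B (sol.u 0)) (sol.u 0) ≤
      (c^2/2) * (‖B‖ * (‖sol.u 0‖ ^ 2 + rIn (sol.Au 0) (sol.u 0) + ‖sol.du 0‖ ^ 2)) :=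
    mul_le_mul_of_nonneg_left hY0D (by positivity)
  have h7 : c * (rIn (sol.Au 0) (sol.u 0) + ‖sol.du 0‖ ^ 2) ≤
      c * (‖sol.u 0‖ ^ 2 + rIn (sol.Au 0) (sol.u 0) + ‖sol.du 0‖ ^ 2) := by
    linarith [mul_nonneg hc.le (sq_nonneg ‖sol.u 0‖)]
  have hkey : c^2 * (t * (rIn (sol.Au t) (sol.u t) + ‖sol.du t‖ ^ 2)) ≤
      (2 + 3*c + 2*c^2 + c*‖B‖ + c^2*‖B‖)
        * (‖sol.u 0‖ ^ 2 + rIn (sol.Au 0) (sol.u 0) + ‖sol.du 0‖ ^ 2) := by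
    linarith [h1, h2, h3, h4, h5, h6, h7, mul_nonneg hc2 hD0,
      mul_nonneg (mul_nonneg hc2 hβ) hD0, mul_nonneg hc.le (mul_nonneg hβ hD0)]
  -- finish
  have ht0 : (0:ℝ) < t := by linarith
  have hct : (0:ℝ) < c^2 * t := by positivity
  have hfin : (rIn (sol.Au t) (sol.u t) + ‖sol.du t‖ ^ 2) * (c^2 * t) ≤
      (2 + 3*c + 2*c^2 + c*‖B‖ + c^2*‖B‖)
        * (‖sol.u 0‖ ^ 2 + rIn (sol.Au 0) (sol.u 0) + ‖sol.du 0‖ ^ 2) := by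
    linarith [hkey]
  show rIn (sol.Au t) (sol.u t) + ‖sol.du t‖ ^ 2 ≤
      (2 + 3*c + 2*c^2 + c*‖B‖ + c^2*‖B‖)/c^2 * t⁻¹
        * (‖sol.u 0‖ ^ 2 + rIn (sol.Au 0) (sol.u 0) + ‖sol.du 0‖ ^ 2)
  have hcne : c ≠ 0 := ne_of_gt hc
  have htne : t ≠ 0 := ne_of_gt ht0
  calc rIn (sol.Au t) (sol.u t) + ‖sol.du t‖ ^ 2
      = ((rIn (sol.Au t) (sol.u t) + ‖sol.du t‖ ^ 2) * (c^2 * t)) / (c^2 * t) := by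
        field_simp
    _ ≤ ((2 + 3*c + 2*c^2 + c*‖B‖ + c^2*‖B‖)
        * (‖sol.u 0‖ ^ 2 + rIn (sol.Au 0) (sol.u 0) + ‖sol.du 0‖ ^ 2)) / (c^2 * t) := by
        gcongr
    _ = (2 + 3*c + 2*c^2 + c*‖B‖ + c^2*‖B‖)/c^2 * t⁻¹
        * (‖sol.u 0‖ ^ 2 + rIn (sol.Au 0) (sol.u 0) + ‖sol.du 0‖ ^ 2) := by
        field_simp
end

section
/- Let a : ℝ^d → ℝ be continuous, nonnegative, and satisfy a(x) ≥ c for all |x| > R, where c, R > 0. Then there exist C > 0 and λ₀ > 0 such that for every λ ∈ (0, λ₀) and every u ∈ C_c^∞(ℝ^d, ℂ): ∫_{ℝ^d} |∇u(x)|² dx + λ·∫_{ℝ^d} a(x)|u(x)|² dx ≥ C·λ·∫_{ℝ^d} |u(x)|² dx. -/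
open MeasureTheory

noncomputable section

/-- The spatial partial derivative `∂ᵢ f` of `f : ℝ^d → ℂ`. -/
def pd {d : ℕ} (i : Fin d) (f : EuclideanSpace ℝ (Fin d) → ℂ)
    (x : EuclideanSpace ℝ (Fin d)) : ℂ :=
  fderiv ℝ f x (EuclideanSpace.single i 1)

/-- `g` is a family of real symmetric matrices with smooth entries having bounded derivatives
of all orders, uniformly elliptic with constant `K ≥ 1`. -/
structure EllipticCoeff {d : ℕ} (g : EuclideanSpace ℝ (Fin d) → Matrix (Fin d) (Fin d) ℝ)
    (K : ℝ) : Prop where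
  one_le : 1 ≤ K
  smooth : ∀ i j, ContDiff ℝ (⊤ : ℕ∞) fun x => g x i j
  bdd_deriv : ∀ (i j) (n : ℕ), 1 ≤ n → ∃ M, ∀ x, ‖iteratedFDeriv ℝ n (fun y => g y i j) x‖ ≤ M
  symm : ∀ x i j, g x i j = g x j i
  ell_lower : ∀ (x ξ : EuclideanSpace ℝ (Fin d)),
    (1 / K) * ‖ξ‖ ^ 2 ≤ ∑ i, ∑ j, g x i j * ξ i * ξ j
  ell_upper : ∀ (x ξ : EuclideanSpace ℝ (Fin d)),
    ∑ i, ∑ j, g x i j * ξ i * ξ j ≤ K * ‖ξ‖ ^ 2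

/-- A smooth real function with bounded derivatives of all orders. -/
def SmoothBdd {d : ℕ} (a : EuclideanSpace ℝ (Fin d) → ℝ) : Prop :=
  ContDiff ℝ (⊤ : ℕ∞) a ∧ ∀ n : ℕ, 1 ≤ n → ∃ M, ∀ x, ‖iteratedFDeriv ℝ n a x‖ ≤ M

/-- Pointwise FTC + Young bound along a segment. -/
lemma stmt10_ftc_ptwise {d : ℕ} (u : EuclideanSpace ℝ (Fin d) → ℂ) (hu : ContDiff ℝ (⊤ : ℕ∞) u)
    (e : EuclideanSpace ℝ (Fin d)) (T ε : ℝ) (hT : 0 < T) (hε : 0 < ε)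
    (x : EuclideanSpace ℝ (Fin d)) :
    ‖u x‖^2 ≤ ‖u (x + T • e)‖^2 +
      ∫ t in (0:ℝ)..T, (ε * ‖u (x + t • e)‖^2 + ε⁻¹ * ‖fderiv ℝ u (x + t • e) e‖^2) := by
  have hud : Differentiable ℝ u := hu.differentiable (by simp)
  have hγ : ∀ t : ℝ, HasDerivAt (fun s : ℝ => x + s • e) e t := by
    intro t; simpa using ((hasDerivAt_id t).smul_const e).const_add x
  set v : ℝ → ℂ := fun t => u (x + t • e) with hv
  set v' : ℝ → ℂ := fun t => fderiv ℝ u (x + t • e) e with hv'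
  have hvd : ∀ t, HasDerivAt v (v' t) t := fun t =>
    (hud (x + t • e)).hasFDerivAt.comp_hasDerivAt t (hγ t)
  have hγc : Continuous fun t : ℝ => x + t • e := by fun_prop
  have hvc : Continuous v := hu.continuous.comp hγc
  have hv'c : Continuous v' := by
    have h1 : Continuous (fderiv ℝ u) := (hu.fderiv_right (m := (⊤ : ℕ∞)) le_rfl).continuous
    exact ((ContinuousLinearMap.apply ℝ ℂ e).continuous.comp (h1.comp hγc))
  have hφ : ∀ t, HasDerivAt (fun s => ‖v s‖^2) (2 * (inner ℝ (v t) (v' t) : ℝ)) t := by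
    intro t
    have h := HasDerivAt.inner ℝ (hvd t) (hvd t)
    have heq : (fun s => (inner ℝ (v s) (v s) : ℝ)) = fun s => ‖v s‖^2 := by
      funext s; rw [real_inner_self_eq_norm_sq]
    rw [heq] at h
    refine h.congr_deriv ?_
    rw [real_inner_comm]; ring
  have hicont : Continuous fun t => 2 * (inner ℝ (v t) (v' t) : ℝ) :=
    continuous_const.mul (hvc.inner hv'c)
  have key : ∫ t in (0:ℝ)..T, 2 * (inner ℝ (v t) (v' t) : ℝ) = ‖v T‖^2 - ‖v 0‖^2 :=
    intervalIntegral.integral_eq_sub_of_hasDerivAt (fun t _ => hφ t)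
      (hicont.intervalIntegrable 0 T)
  have hbound : ∀ t : ℝ, -(2 * (inner ℝ (v t) (v' t) : ℝ)) ≤ ε * ‖v t‖^2 + ε⁻¹ * ‖v' t‖^2 := by
    intro t
    have h1 : |(inner ℝ (v t) (v' t) : ℝ)| ≤ ‖v t‖ * ‖v' t‖ := abs_real_inner_le_norm _ _
    have h2 : (0:ℝ) ≤ (ε * ‖v t‖ - ‖v' t‖)^2 := sq_nonneg _
    have h3 : ε * ε⁻¹ = 1 := mul_inv_cancel₀ hε.ne'
    have h4 : -(inner ℝ (v t) (v' t) : ℝ) ≤ ‖v t‖ * ‖v' t‖ := by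
      cases abs_le.mp h1; linarith
    nlinarith [sq_nonneg (‖v t‖), sq_nonneg (‖v' t‖), hε, mul_pos hε hε]
  have hmono : ∫ t in (0:ℝ)..T, -(2 * (inner ℝ (v t) (v' t) : ℝ)) ≤
      ∫ t in (0:ℝ)..T, (ε * ‖v t‖^2 + ε⁻¹ * ‖v' t‖^2) := by
    apply intervalIntegral.integral_mono_on hT.le
      (hicont.neg.intervalIntegrable 0 T)
      (((continuous_const.mul ((hvc.norm).pow 2)).add
        (continuous_const.mul ((hv'c.norm).pow 2))).intervalIntegrable 0 T)
    exact fun t _ => hbound t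
  have h0 : v 0 = u x := by simp [hv]
  have hTv : v T = u (x + T • e) := rfl
  rw [intervalIntegral.integral_neg] at hmono
  have : ‖v 0‖^2 = ‖v T‖^2 - ∫ t in (0:ℝ)..T, 2 * (inner ℝ (v t) (v' t) : ℝ) := by
    rw [key]; ring
  rw [h0] at this
  rw [this, hTv.symm]
  linarith [hmono]

/-- Fubini + translation invariance for the segment average. -/
lemma stmt10_fubini_aux {d : ℕ} (g : EuclideanSpace ℝ (Fin d) → ℝ) (hgc : Continuous g)
    (hgs : HasCompactSupport g) (e : EuclideanSpace ℝ (Fin d)) (T : ℝ) (hT : 0 < T) :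
    (∫ x, ∫ t in (0:ℝ)..T, g (x + t • e)) = T * ∫ x, g x ∧
    Integrable (fun x => ∫ t in (0:ℝ)..T, g (x + t • e)) := by
  have hIg : Integrable g := hgc.integrable_of_hasCompactSupport hgs
  set ν : Measure ℝ := volume.restrict (Set.Ioc 0 T) with hν
  set F : EuclideanSpace ℝ (Fin d) × ℝ → ℝ := fun p => g (p.1 + p.2 • e) with hF
  have hFc : Continuous F := hgc.comp (continuous_fst.add (continuous_snd.smul continuous_const))
  have hFint : Integrable F (volume.prod ν) := by
    constructor
    · exact hFc.aestronglyMeasurable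
    · show (∫⁻ p, ‖F p‖₊ ∂(volume.prod ν)) < ⊤
      rw [lintegral_prod_symm _ (hFc.aemeasurable.nnnorm.coe_nnreal_ennreal)]
      have hinner : ∀ t : ℝ, (∫⁻ x, (‖F (x, t)‖₊ : ENNReal)) = ∫⁻ x, (‖g x‖₊ : ENNReal) := by
        intro t
        exact lintegral_add_right_eq_self (fun y => (‖g y‖₊ : ENNReal)) (t • e)
      calc ∫⁻ t, ∫⁻ x, (‖F (x, t)‖₊ : ENNReal) ∂volume ∂ν
          = ∫⁻ t, (∫⁻ x, (‖g x‖₊ : ENNReal)) ∂ν := by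
            exact lintegral_congr hinner
        _ = ν Set.univ * ∫⁻ x, (‖g x‖₊ : ENNReal) := by rw [lintegral_const]; ring
        _ < ⊤ := by
            apply ENNReal.mul_lt_top
            · simp [hν, Real.volume_Ioc]
            · exact hIg.hasFiniteIntegral
  have hswap := integral_integral_swap (f := fun x t => g (x + t • e)) (μ := volume) (ν := ν) hFint
  have htrans : ∀ t : ℝ, (∫ x, g (x + t • e)) = ∫ x, g x := fun t =>
    integral_add_right_eq_self g (t • e)
  have h1 : ∀ x, (∫ t in (0:ℝ)..T, g (x + t • e)) = ∫ t, g (x + t • e) ∂ν := by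
    intro x; rw [intervalIntegral.integral_of_le hT.le]
  constructor
  · simp_rw [h1]
    rw [hswap]
    simp_rw [htrans]
    rw [integral_const]
    simp [hν, Real.volume_Ioc, hT.le, smul_eq_mul]
  · have h2 := hFint.integral_prod_left
    simp only [hF] at h2
    simp_rw [h1]
    exact h2

set_option maxHeartbeats 2000000 in
/-- the low-frequency Poincaré-type bound
`∫|∇u|² + λ∫a|u|² ≥ C·λ·∫|u|²` for small `λ > 0`. -/
theorem stmt10 {d : ℕ} (hd : 1 ≤ d)
    (a : EuclideanSpace ℝ (Fin d) → ℝ) (ha_cont : Continuous a)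
    (ha_nonneg : ∀ x, 0 ≤ a x)
    (c R : ℝ) (hc : 0 < c) (hR : 0 < R)
    (haout : ∀ x : EuclideanSpace ℝ (Fin d), R < ‖x‖ → c ≤ a x) :
    ∃ C > (0:ℝ), ∃ lam₀ > (0:ℝ), ∀ lam : ℝ, 0 < lam → lam < lam₀ →
      ∀ u : EuclideanSpace ℝ (Fin d) → ℂ, ContDiff ℝ (⊤ : ℕ∞) u → HasCompactSupport u →
        C * lam * (∫ x, ‖u x‖ ^ 2) ≤
          (∫ x, ∑ i, ‖pd i u x‖ ^ 2) + lam * ∫ x, a x * ‖u x‖ ^ 2 := by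
  have hC0 : (0:ℝ) < min 1 (c/4) := lt_min one_pos (by positivity)
  refine ⟨min 1 (c/4), hC0, 1/(36*R^2), by positivity, ?_⟩
  intro lam hlam hlam' u hu hsupp
  set i0 : Fin d := ⟨0, hd⟩ with hi0
  set e : EuclideanSpace ℝ (Fin d) := EuclideanSpace.single i0 (1:ℝ) with he_def
  have he : ‖e‖ = 1 := by rw [he_def, EuclideanSpace.norm_single]; norm_num
  set T : ℝ := 3 * R with hT_def
  have hT0 : 0 < T := by positivity
  set ε : ℝ := 1 / (6 * R) with hε_def
  have hε0 : 0 < ε := by rw [hε_def]; positivity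
  have hucont := hu.continuous
  -- integrability of the basic quantities
  have hf1c : Continuous (fun x => ‖u x‖^2) := (hucont.norm).pow 2
  have hf1s : HasCompactSupport (fun x => ‖u x‖^2) :=
    hsupp.comp_left (g := fun z : ℂ => ‖z‖^2) (by simp)
  have hIf1 : Integrable (fun x => ‖u x‖^2) := hf1c.integrable_of_hasCompactSupport hf1s
  have hIf2 : Integrable (fun x => a x * ‖u x‖^2) :=
    (ha_cont.mul hf1c).integrable_of_hasCompactSupport (hf1s.mul_left)
  have hpdc : ∀ i : Fin d, Continuous (fun x => pd i u x) := by
    intro i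
    exact (ContinuousLinearMap.apply ℝ ℂ (EuclideanSpace.single i (1:ℝ))).continuous.comp
      (hu.fderiv_right (m := (⊤ : ℕ∞)) le_rfl).continuous
  have hpds : ∀ i : Fin d, HasCompactSupport (fun x => pd i u x) := by
    intro i
    exact (hsupp.fderiv ℝ).comp_left
      (g := fun L : EuclideanSpace ℝ (Fin d) →L[ℝ] ℂ => L (EuclideanSpace.single i (1:ℝ)))
      (by simp)
  have hIpd : ∀ i : Fin d, Integrable (fun x => ‖pd i u x‖^2) := by
    intro i
    exact (show Continuous (fun x => ‖pd i u x‖^2) from ((hpdc i).norm).pow 2).integrable_of_hasCompactSupport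
      ((hpds i).comp_left (g := fun z : ℂ => ‖z‖^2) (by simp))
  have hIsum : Integrable (fun x => ∑ i, ‖pd i u x‖^2) :=
    integrable_finset_sum _ (fun i _ => hIpd i)
  have hA0 : 0 ≤ ∫ x, a x * ‖u x‖^2 :=
    integral_nonneg (fun x => mul_nonneg (ha_nonneg x) (sq_nonneg _))
  have hG0 : 0 ≤ ∫ x, ‖pd i0 u x‖^2 := integral_nonneg (fun x => sq_nonneg _)
  have hGle : (∫ x, ‖pd i0 u x‖^2) ≤ ∫ x, ∑ i, ‖pd i u x‖^2 := by
    apply integral_mono (hIpd i0) hIsum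
    intro x
    exact Finset.single_le_sum (f := fun i => ‖pd i u x‖^2) (fun i _ => sq_nonneg _)
      (Finset.mem_univ i0)
  -- the auxiliary function g₀
  set g0 : EuclideanSpace ℝ (Fin d) → ℝ :=
    fun y => ε * ‖u y‖^2 + ε⁻¹ * ‖pd i0 u y‖^2 with hg0_def
  have hg0c : Continuous g0 :=
    (continuous_const.mul hf1c).add (continuous_const.mul (((hpdc i0).norm).pow 2))
  have hg0s : HasCompactSupport g0 := by
    apply HasCompactSupport.add
    · exact hf1s.comp_left (g := fun r : ℝ => ε * r) (by simp)
    · exact ((hpds i0).comp_left (g := fun z : ℂ => ‖z‖^2) (by simp)).comp_left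
        (g := fun r : ℝ => ε⁻¹ * r) (by simp)
  have hg0nonneg : ∀ y, 0 ≤ g0 y := fun y =>
    add_nonneg (mul_nonneg hε0.le (sq_nonneg _)) (mul_nonneg (inv_nonneg.mpr hε0.le) (sq_nonneg _))
  have hg0int : (∫ y, g0 y) = ε * (∫ x, ‖u x‖^2) + ε⁻¹ * ∫ x, ‖pd i0 u x‖^2 := by
    rw [hg0_def]
    rw [integral_add (hIf1.const_mul ε) ((hIpd i0).const_mul ε⁻¹),
      integral_const_mul, integral_const_mul]
  obtain ⟨hFub, hIint⟩ := stmt10_fubini_aux g0 hg0c hg0s e T hT0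
  -- pointwise bound
  have hpt : ∀ x, ‖u x‖^2 ≤ ‖u (x + T • e)‖^2 + ∫ t in (0:ℝ)..T, g0 (x + t • e) := by
    intro x
    have h := stmt10_ftc_ptwise u hu e T ε hT0 hε0 x
    have hgeq : ∀ y, g0 y = ε * ‖u y‖^2 + ε⁻¹ * ‖fderiv ℝ u y e‖^2 := by
      intro y; rw [hg0_def]; rfl
    simp_rw [hgeq]
    exact h
  clear_value i0 e T ε g0
  set B : Set (EuclideanSpace ℝ (Fin d)) := Metric.closedBall 0 R with hB_def
  have hBmeas : MeasurableSet B := measurableSet_closedBall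
  have hshift : Integrable (fun x => ‖u (x + T • e)‖^2) := hIf1.comp_add_right _
  have hshift2 : Integrable (fun x => a (x + T • e) * ‖u (x + T • e)‖^2) := hIf2.comp_add_right _
  -- step 1: bound on B
  have hInt2 : IntegrableOn (fun x => ‖u (x + T • e)‖^2 + ∫ t in (0:ℝ)..T, g0 (x + t • e)) B :=
    (hshift.add hIint).integrableOn
  have s1a : (∫ x in B, ‖u x‖^2)
      ≤ ∫ x in B, (‖u (x + T • e)‖^2 + ∫ t in (0:ℝ)..T, g0 (x + t • e)) :=
    setIntegral_mono hIf1.integrableOn hInt2 (fun x => hpt x)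
  have s1b : (∫ x in B, (‖u (x + T • e)‖^2 + ∫ t in (0:ℝ)..T, g0 (x + t • e)))
      = (∫ x in B, ‖u (x + T • e)‖^2) + ∫ x in B, ∫ t in (0:ℝ)..T, g0 (x + t • e) :=
    integral_add hshift.integrableOn hIint.integrableOn
  have step1 : (∫ x in B, ‖u x‖^2) ≤
      (∫ x in B, ‖u (x + T • e)‖^2) + ∫ x in B, ∫ t in (0:ℝ)..T, g0 (x + t • e) := by
    rw [← s1b]; exact s1a
  -- step 2: the shifted term is controlled by A
  have step2 : (∫ x in B, ‖u (x + T • e)‖^2) ≤ (1/c) * ∫ x, a x * ‖u x‖^2 := by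
    have hout : ∀ x ∈ B, c * ‖u (x + T • e)‖^2 ≤ a (x + T • e) * ‖u (x + T • e)‖^2 := by
      intro x hx
      have hxR : ‖x‖ ≤ R := by
        rw [hB_def, Metric.mem_closedBall, dist_zero_right] at hx; exact hx
      have hTe : ‖T • e‖ = T := by
        rw [norm_smul, he, Real.norm_eq_abs, abs_of_pos hT0]; ring
      have htr : ‖T • e‖ ≤ ‖x + T • e‖ + ‖x‖ := by
        have h := norm_add_le (x + T • e) (-x)
        simpa using h
      have hfar : R < ‖x + T • e‖ := by
        rw [hTe] at htr; linarith
      exact mul_le_mul_of_nonneg_right (haout _ hfar) (sq_nonneg _)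
    have h1 : c * (∫ x in B, ‖u (x + T • e)‖^2) ≤ ∫ x, a x * ‖u x‖^2 := by
      calc c * (∫ x in B, ‖u (x + T • e)‖^2)
          = ∫ x in B, c * ‖u (x + T • e)‖^2 := (integral_const_mul _ _).symm
        _ ≤ ∫ x in B, a (x + T • e) * ‖u (x + T • e)‖^2 :=
            setIntegral_mono_on (f := fun x => c * ‖u (x + T • e)‖^2)
              (g := fun x => a (x + T • e) * ‖u (x + T • e)‖^2)
              ((hshift.const_mul c).integrableOn)
              hshift2.integrableOn hBmeas hout
        _ ≤ ∫ x, a (x + T • e) * ‖u (x + T • e)‖^2 :=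
            setIntegral_le_integral hshift2
              (ae_of_all _ (fun x => mul_nonneg (ha_nonneg _) (sq_nonneg _)))
        _ = ∫ x, a x * ‖u x‖^2 :=
            integral_add_right_eq_self (fun y => a y * ‖u y‖^2) (T • e)
    rw [one_div, inv_mul_eq_div]
    exact (le_div_iff₀' hc).mpr h1
  -- step 3: the segment term
  have step3 : (∫ x in B, ∫ t in (0:ℝ)..T, g0 (x + t • e)) ≤
      T * (ε * (∫ x, ‖u x‖^2) + ε⁻¹ * ∫ x, ‖pd i0 u x‖^2) := by
    calc (∫ x in B, ∫ t in (0:ℝ)..T, g0 (x + t • e))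
        ≤ ∫ x, ∫ t in (0:ℝ)..T, g0 (x + t • e) :=
          setIntegral_le_integral hIint (ae_of_all _ (fun x =>
            intervalIntegral.integral_nonneg hT0.le (fun t _ => hg0nonneg _)))
      _ = T * ∫ y, g0 y := hFub
      _ = _ := by rw [hg0int]
  -- step 4: outside B
  have step4 : (∫ x in Bᶜ, ‖u x‖^2) ≤ (1/c) * ∫ x, a x * ‖u x‖^2 := by
    have hout : ∀ x ∈ Bᶜ, c * ‖u x‖^2 ≤ a x * ‖u x‖^2 := by
      intro x hx
      have : R < ‖x‖ := by
        rw [hB_def, Set.mem_compl_iff, Metric.mem_closedBall, dist_zero_right] at hx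
        linarith [not_le.mp hx]
      exact mul_le_mul_of_nonneg_right (haout _ this) (sq_nonneg _)
    have h1 : c * (∫ x in Bᶜ, ‖u x‖^2) ≤ ∫ x, a x * ‖u x‖^2 := by
      calc c * (∫ x in Bᶜ, ‖u x‖^2)
          = ∫ x in Bᶜ, c * ‖u x‖^2 := (integral_const_mul _ _).symm
        _ ≤ ∫ x in Bᶜ, a x * ‖u x‖^2 :=
            setIntegral_mono_on (f := fun x => c * ‖u x‖^2)
              (g := fun x => a x * ‖u x‖^2)
              ((hIf1.const_mul c).integrableOn)
              hIf2.integrableOn hBmeas.compl hout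
        _ ≤ ∫ x, a x * ‖u x‖^2 :=
            setIntegral_le_integral hIf2
              (ae_of_all _ (fun x => mul_nonneg (ha_nonneg _) (sq_nonneg _)))
    rw [one_div, inv_mul_eq_div]
    exact (le_div_iff₀' hc).mpr h1
  -- combine
  have hsplit : (∫ x in B, ‖u x‖^2) + (∫ x in Bᶜ, ‖u x‖^2) = ∫ x, ‖u x‖^2 :=
    integral_add_compl hBmeas hIf1
  have hTε : T * ε = 1/2 := by
    rw [hT_def, hε_def]; field_simp; ring
  have hTεinv : T * ε⁻¹ = 18 * R^2 := by
    rw [hT_def, hε_def]; field_simp; ring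
  have hNb : (∫ x, ‖u x‖^2) ≤ (4/c) * (∫ x, a x * ‖u x‖^2)
      + 36 * R^2 * ∫ x, ‖pd i0 u x‖^2 := by
    have h4c : (4:ℝ)/c = 4*(1/c) := by ring
    have h3 : T * (ε * (∫ x, ‖u x‖^2) + ε⁻¹ * ∫ x, ‖pd i0 u x‖^2)
        = (1/2) * (∫ x, ‖u x‖^2) + 18 * R^2 * ∫ x, ‖pd i0 u x‖^2 := by
      rw [mul_add, ← mul_assoc, ← mul_assoc, hTε, hTεinv]
    rw [h3] at step3
    nlinarith [step1, step2, step3, step4, hsplit, h4c, hc, mul_pos hc hc]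
  -- final arithmetic
  set C : ℝ := min 1 (c/4) with hC_def
  set lamA : ℝ := lam * ∫ x, a x * ‖u x‖^2 with hlamA
  have hCle1 : C ≤ 1 := min_le_left _ _
  have hClec : C ≤ c/4 := min_le_right _ _
  have h36 : lam * (36 * R^2) ≤ 1 := by
    rw [div_eq_mul_inv, one_mul] at hlam'
    have h := (lt_div_iff₀ (by positivity : (0:ℝ) < 36 * R^2)).mp (by
      rw [div_eq_mul_inv, one_mul]; exact hlam')
    linarith
  have e1 : C * lam * (∫ x, ‖u x‖^2) ≤ C * lam * ((4/c) * (∫ x, a x * ‖u x‖^2)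
      + 36 * R^2 * ∫ x, ‖pd i0 u x‖^2) :=
    mul_le_mul_of_nonneg_left hNb (mul_nonneg hC0.le hlam.le)
  have e3 : C * (4/c) ≤ 1 := by
    calc C * (4/c) ≤ (c/4) * (4/c) := mul_le_mul_of_nonneg_right hClec (by positivity)
      _ = 1 := by field_simp
  have e4 : C * (lam * (36 * R^2)) ≤ 1 := by
    calc C * (lam * (36 * R^2)) ≤ 1 * 1 :=
          mul_le_mul hCle1 h36 (by positivity) zero_le_one
      _ = 1 := by ring
  have hlamA0 : 0 ≤ lam * ∫ x, a x * ‖u x‖^2 := mul_nonneg hlam.le hA0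
  have key : C * lam * (∫ x, ‖u x‖^2) ≤ lam * (∫ x, a x * ‖u x‖^2) + ∫ x, ‖pd i0 u x‖^2 := by
    have e2 : C * lam * ((4/c) * (∫ x, a x * ‖u x‖^2) + 36 * R^2 * ∫ x, ‖pd i0 u x‖^2)
        = (C * (4/c)) * (lam * ∫ x, a x * ‖u x‖^2)
        + (C * (lam * (36 * R^2))) * ∫ x, ‖pd i0 u x‖^2 := by ring
    nlinarith [e1, e2, e3, e4, hlamA0, hG0]
  linarith [key, hGle]

end
end

section
/- Let a : ℝ^d → ℝ be smooth, nonnegative, with bounded derivatives, and a(x) ≥ c for |x| > R (c, R > 0 constants). Then there exist δ > 0, C > 0 and λ₀ > 0 such that for every λ ∈ ℂ with 0 < |λ| < λ₀ and (Re λ > 0 or |Im λ| > δ|Re λ|), and every u ∈ C_c^∞(ℝ^d, ℂ): |∑ᵢⱼ ∫ g_{ij}(x)·∂_ju(x)·conj(∂ᵢu(x)) dx + λ²∫|u|² dx + λ∫ a(x)|u(x)|² dx| ≥ C·|λ|·∫|u|² dx. (This yields existence of the low-frequency resolvent (P+λ²+λa)⁻¹ with bound O(|λ|⁻¹).) -/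
open MeasureTheory

noncomputable section

lemma ptwise (p q r s ε : ℝ) (hε : 0 < ε) :
    -(2*(p*r+q*s)) ≤ ε*(p^2+q^2) + (1/ε)*(r^2+s^2) := by
  rw [← mul_le_mul_iff_right₀ hε]
  have h2 : ε * (1/ε) = 1 := mul_one_div_cancel hε.ne'
  nlinarith [sq_nonneg (ε*p+r), sq_nonneg (ε*q+s)]

lemma normsq_eq (z : ℂ) : ‖z‖^2 = z.re^2 + z.im^2 := by
  rw [Complex.sq_norm, Complex.normSq_apply]; ring



lemma sum_eq_ofReal {d : ℕ} (m : Matrix (Fin d) (Fin d) ℝ) (hsym : ∀ i j, m i j = m j i)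
    (w : Fin d → ℂ) :
    (∑ i, ∑ j, (m i j : ℂ) * w j * (starRingEnd ℂ) (w i)) =
      ((∑ i, ∑ j, m i j * ((w j).re*(w i).re + (w j).im*(w i).im) : ℝ) : ℂ) := by
  apply Complex.ext
  · rw [Complex.ofReal_re, Complex.re_sum]
    refine Finset.sum_congr rfl fun i _ => ?_
    rw [Complex.re_sum]
    refine Finset.sum_congr rfl fun j _ => ?_
    simp [Complex.mul_re, Complex.mul_im]; ring
  · rw [Complex.ofReal_im, Complex.im_sum]
    have : ∀ i, (∑ j, ((m i j : ℂ) * w j * (starRingEnd ℂ) (w i)).im)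
        = ∑ j, m i j * ((w j).im*(w i).re - (w j).re*(w i).im) := by
      intro i; refine Finset.sum_congr rfl fun j _ => ?_
      simp only [Complex.mul_im, Complex.mul_re, Complex.conj_re, Complex.conj_im,
        Complex.ofReal_re, Complex.ofReal_im]; ring
    simp only [Complex.im_sum, this]
    have h1 : ∑ i, ∑ j, m i j * ((w j).im*(w i).re - (w j).re*(w i).im)
        = (∑ i, ∑ j, m i j * ((w j).im*(w i).re)) - ∑ i, ∑ j, m i j * ((w j).re*(w i).im) := by
      simp [mul_sub, Finset.sum_sub_distrib]
    rw [h1, sub_eq_zero]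
    rw [Finset.sum_comm]
    refine Finset.sum_congr rfl fun i _ => Finset.sum_congr rfl fun j _ => ?_
    rw [hsym j i]; ring

lemma quad_lower {d : ℕ} (i₀ : Fin d) (m : Matrix (Fin d) (Fin d) ℝ) (K : ℝ) (hK : 0 < K)
    (hlow : ∀ ξ : EuclideanSpace ℝ (Fin d), (1/K)*‖ξ‖^2 ≤ ∑ i, ∑ j, m i j * ξ i * ξ j)
    (w : Fin d → ℂ) :
    (1/K) * ‖w i₀‖^2 ≤ ∑ i, ∑ j, m i j * ((w j).re*(w i).re + (w j).im*(w i).im) := by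
  set ξr : EuclideanSpace ℝ (Fin d) := (WithLp.equiv 2 (Fin d → ℝ)).symm (fun i => (w i).re)
  set ξi : EuclideanSpace ℝ (Fin d) := (WithLp.equiv 2 (Fin d → ℝ)).symm (fun i => (w i).im)
  have happr : ∀ i, ξr i = (w i).re := fun i => rfl
  have happi : ∀ i, ξi i = (w i).im := fun i => rfl
  have hnorm : ∀ (ξ : EuclideanSpace ℝ (Fin d)), ‖ξ‖^2 = ∑ i, ξ i ^ 2 := by
    intro ξ
    rw [EuclideanSpace.norm_eq, Real.sq_sqrt (by positivity)]
    simp [sq_abs]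
  have hsplit : ∑ i, ∑ j, m i j * ((w j).re*(w i).re + (w j).im*(w i).im)
      = (∑ i, ∑ j, m i j * ξr i * ξr j) + ∑ i, ∑ j, m i j * ξi i * ξi j := by
    rw [← Finset.sum_add_distrib]
    refine Finset.sum_congr rfl fun i _ => ?_
    rw [← Finset.sum_add_distrib]
    refine Finset.sum_congr rfl fun j _ => ?_
    rw [happr, happr, happi, happi]; ring
  rw [hsplit]
  have h1 := hlow ξr
  have h2 := hlow ξi
  have h3 : (w i₀).re^2 ≤ ‖ξr‖^2 := by
    rw [hnorm]
    rw [← happr i₀]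
    exact Finset.single_le_sum (f := fun i => ξr i ^ 2) (fun i _ => sq_nonneg _) (Finset.mem_univ i₀)
  have h4 : (w i₀).im^2 ≤ ‖ξi‖^2 := by
    rw [hnorm, ← happi i₀]
    exact Finset.single_le_sum (f := fun i => ξi i ^ 2) (fun i _ => sq_nonneg _) (Finset.mem_univ i₀)
  have h5 : ‖w i₀‖^2 = (w i₀).re^2 + (w i₀).im^2 := by
    rw [Complex.sq_norm, Complex.normSq_apply]; ring
  have hKpos : 0 < 1/K := by positivity
  nlinarith [h1, h2]


lemma revtri (x y : ℂ) : ‖x‖ - ‖y‖ ≤ ‖(x + y)‖ := by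
  have h : ‖x‖ ≤ ‖(x + y)‖ + ‖y‖ := by
    simpa using norm_add_le (x + y) (-y)
  linarith

lemma le_of_sq_le_sq' (a b : ℝ) (ha : 0 ≤ a) (hb : 0 ≤ b) (h : a^2 ≤ b^2) : a ≤ b := by
  nlinarith

set_option maxHeartbeats 1000000 in
lemma keyC (q A N C₀ : ℝ) (hq : 0 ≤ q) (hA : 0 ≤ A) (hN : 0 ≤ N) (hC₀ : 1 ≤ C₀)
    (hNE : N ≤ C₀*(q+A)) (lam : ℂ) (h0 : lam ≠ 0)
    (hsmall : ‖lam‖ < min (1/2) (1/(16*C₀)))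
    (hreg : 0 < lam.re ∨ 1 * |lam.re| < |lam.im|) :
    (1/(16*C₀)) * ‖lam‖ * N ≤
      ‖((q:ℂ) + lam^2 * (N:ℂ) + lam * (A:ℂ))‖ := by
  have hC₀0 : 0 < C₀ := lt_of_lt_of_le one_pos hC₀
  set L := ‖lam‖ with hL
  have hLpos : 0 < L := by simpa [hL] using (norm_pos_iff.mpr h0)
  have hL1 : L < 1/2 := lt_of_lt_of_le hsmall (min_le_left _ _)
  have hL2 : L < 1/(16*C₀) := lt_of_lt_of_le hsmall (min_le_right _ _)
  have hCL : C₀ * L ≤ 1/16 := by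
    rw [lt_div_iff₀ (by positivity)] at hL2
    nlinarith
  have habs2 : ‖(lam^2 * (N:ℂ))‖ = L^2 * N := by
    simp [hL, norm_mul, norm_pow, Complex.norm_real, abs_of_nonneg hN]
  have habsA : ‖(lam * (A:ℂ))‖ = L * A := by
    simp [hL, norm_mul, Complex.norm_real, abs_of_nonneg hA]
  have hLsq : L^2 = lam.re*lam.re + lam.im*lam.im := by
    rw [hL, Complex.sq_norm, Complex.normSq_apply]
  clear_value L
  by_cases hcase : 2*L*A + 2*L^2*N ≤ q
  · -- case (i)
    have h1 : q - (L^2*N + L*A) ≤ ‖((q:ℂ) + lam^2 * (N:ℂ) + lam * (A:ℂ))‖ := by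
      have h2 := revtri ((q:ℂ)) (lam^2 * (N:ℂ) + lam * (A:ℂ))
      rw [← add_assoc] at h2
      have h3 : ‖(lam^2 * (N:ℂ) + lam * (A:ℂ))‖ ≤ L^2*N + L*A := by
        calc ‖(lam^2 * (N:ℂ) + lam * (A:ℂ))‖
            ≤ ‖(lam^2 * (N:ℂ))‖ + ‖(lam * (A:ℂ))‖ :=
              norm_add_le _ _
          _ = L^2*N + L*A := by rw [habs2, habsA]
      have h4 : ‖((q:ℂ))‖ = q := by rw [Complex.norm_real, Real.norm_eq_abs, abs_of_nonneg hq]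
      linarith
    have hLA : L*A ≤ q/2 := by nlinarith [mul_nonneg (mul_nonneg hLpos.le hLpos.le) hN]
    have hLq : L*q ≤ q/2 := by nlinarith
    have hLN : L * N ≤ C₀ * q := by
      have e1 : L * N ≤ L * (C₀ * (q + A)) := mul_le_mul_of_nonneg_left hNE hLpos.le
      have e2 : L * (C₀ * (q + A)) = C₀ * (L*q) + C₀ * (L*A) := by ring
      nlinarith [mul_le_mul_of_nonneg_left hLA hC₀0.le, mul_le_mul_of_nonneg_left hLq hC₀0.le]
    have hfin : (1/(16*C₀)) * L * N ≤ q/16 := by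
      have e : (1/(16*C₀)) * L * N = (1/(16*C₀)) * (L * N) := by ring
      have e2 : (1/(16*C₀)) * (C₀ * q) = q/16 := by field_simp
      rw [e]
      calc (1/(16*C₀)) * (L * N) ≤ (1/(16*C₀)) * (C₀ * q) :=
            mul_le_mul_of_nonneg_left hLN (by positivity)
        _ = q/16 := e2
    have : q/16 ≤ q - (L^2*N + L*A) := by nlinarith [mul_nonneg (mul_nonneg hLpos.le hLpos.le) hN]
    linarith
  · -- case (ii)
    push_neg at hcase
    have hLN2 : L*N ≤ N/2 := by nlinarith
    have hNA : N ≤ 4*C₀*A := by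
      have p1 : C₀ * q ≤ C₀ * (2*L*A + 2*L^2*N) := mul_le_mul_of_nonneg_left hcase.le hC₀0.le
      have p2 : C₀ * (2*L*A + 2*L^2*N) = 2*((C₀*L)*A) + 2*((C₀*L)*(L*N)) := by ring
      have p3 : (C₀*L)*A ≤ (1/16)*A := mul_le_mul_of_nonneg_right hCL hA
      have p4 : (C₀*L)*(L*N) ≤ (1/16)*(L*N) :=
        mul_le_mul_of_nonneg_right hCL (mul_nonneg hLpos.le hN)
      nlinarith
    have hqA : (L/2) * A ≤ ‖((q:ℂ) + lam * (A:ℂ))‖ := by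
      have hre' : ((q:ℂ) + lam * (A:ℂ)).re = q + lam.re * A := by simp
      have him' : ((q:ℂ) + lam * (A:ℂ)).im = lam.im * A := by simp
      have hsq := Complex.sq_norm ((q:ℂ) + lam * (A:ℂ))
      rw [Complex.normSq_apply, hre', him'] at hsq
      have hZnn := norm_nonneg ((q:ℂ) + lam * (A:ℂ))
      have hZim := Complex.abs_im_le_norm ((q:ℂ) + lam * (A:ℂ))
      rw [him'] at hZim
      set Z := ‖((q:ℂ) + lam * (A:ℂ))‖ with hZ
      clear_value Z
      rcases le_or_gt 0 lam.re with hre | hre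
      · refine le_of_sq_le_sq' _ _ (by positivity) hZnn ?_
        have k1 : (lam.re*A)^2 + (lam.im*A)^2 ≤ Z^2 := by
          nlinarith [mul_nonneg (mul_nonneg hq hre) hA, sq_nonneg q]
        have k2 : ((L/2)*A)^2 ≤ (lam.re*A)^2 + (lam.im*A)^2 := by
          nlinarith [hLsq, sq_nonneg A, sq_nonneg (L*A)]
        linarith
      · have hregim : 1 * |lam.re| < |lam.im| := by
          rcases hreg with h | h
          · linarith
          · exact h
        have h3 : |lam.im * A| ≤ Z := hZim
        rw [abs_mul, abs_of_nonneg hA] at h3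
        have hmm : lam.re*lam.re ≤ lam.im*lam.im := by
          nlinarith [abs_nonneg lam.re, abs_nonneg lam.im, abs_mul_abs_self lam.re,
            abs_mul_abs_self lam.im]
        have h4 : L/2 ≤ |lam.im| := by
          refine le_of_sq_le_sq' _ _ (by positivity) (abs_nonneg _) ?_
          nlinarith [hLsq, abs_mul_abs_self lam.im]
        have h5' : (L/2)*A ≤ |lam.im| * A := mul_le_mul_of_nonneg_right h4 hA
        linarith
    have h5 : ‖((q:ℂ) + lam * (A:ℂ))‖ - L^2*N ≤
        ‖((q:ℂ) + lam^2*(N:ℂ) + lam * (A:ℂ))‖ := by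
      have heq : (q:ℂ) + lam^2*(N:ℂ) + lam * (A:ℂ) = ((q:ℂ) + lam * (A:ℂ)) + lam^2*(N:ℂ) := by
        ring
      rw [heq]
      have := revtri ((q:ℂ) + lam * (A:ℂ)) (lam^2*(N:ℂ))
      rw [habs2] at this
      linarith
    have h6 : L^2*N ≤ (L/4)*A := by
      have : L^2*N = L*(L*N) := by ring
      have e1 : L*(L*N) ≤ L*(N/2) := mul_le_mul_of_nonneg_left hLN2 hLpos.le
      have e2 : L*(N/2) ≤ L*(2*C₀*A) := by
        have : N/2 ≤ 2*C₀*A := by linarith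
        exact mul_le_mul_of_nonneg_left this hLpos.le
      have e3 : L*(2*C₀*A) = 2*((C₀*L)*A) := by ring
      have e4 : (C₀*L)*A ≤ (1/16)*A := mul_le_mul_of_nonneg_right hCL hA
      nlinarith [mul_nonneg hLpos.le hA]
    have h7 : (1/(16*C₀)) * L * N ≤ (L/4) * A := by
      have e : (1/(16*C₀)) * L * N ≤ (1/(16*C₀)) * L * (4*C₀*A) :=
        mul_le_mul_of_nonneg_left hNA (by positivity)
      have e2 : (1/(16*C₀)) * L * (4*C₀*A) = (L/4)*A := by field_simp; ring
      linarith
    linarith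

variable {d : ℕ}

lemma pd_cont (i : Fin d) (u : EuclideanSpace ℝ (Fin d) → ℂ) (hu : ContDiff ℝ (⊤ : ℕ∞) u) :
    Continuous (pd i u) :=
  (hu.continuous_fderiv (by simp)).clm_apply continuous_const

lemma pd_supp (i : Fin d) (u : EuclideanSpace ℝ (Fin d) → ℂ) (hs : HasCompactSupport u) :
    HasCompactSupport (pd i u) :=
  (hs.fderiv ℝ).comp_left (g := fun L : EuclideanSpace ℝ (Fin d) →L[ℝ] ℂ =>
    L (EuclideanSpace.single i 1)) rfl

lemma partB (hd : 1 ≤ d) (u : EuclideanSpace ℝ (Fin d) → ℂ)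
    (hu : ContDiff ℝ (⊤ : ℕ∞) u) (hsupp : HasCompactSupport u)
    (a : EuclideanSpace ℝ (Fin d) → ℝ) (ha_cont : Continuous a) (ha_nonneg : ∀ x, 0 ≤ a x)
    (c R : ℝ) (hc : 0 < c) (hR : 0 < R)
    (haout : ∀ x : EuclideanSpace ℝ (Fin d), R < ‖x‖ → c ≤ a x) :
    (∫ x, ‖u x‖ ^ 2) ≤ (4/c) * (∫ x, a x * ‖u x‖ ^ 2)
      + 36*R^2 * ∫ x, ‖pd (⟨0, hd⟩ : Fin d) u x‖ ^ 2 := by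
  set i₀ : Fin d := ⟨0, hd⟩
  set e : EuclideanSpace ℝ (Fin d) := EuclideanSpace.single i₀ (1:ℝ) with he
  have hnorme : ‖e‖ = 1 := by rw [he, EuclideanSpace.norm_single]; norm_num
  set T : ℝ := 3*R with hT
  have hTpos : 0 < T := by positivity
  set ε : ℝ := 1/(6*R) with hε
  have hεpos : 0 < ε := by positivity
  set v : EuclideanSpace ℝ (Fin d) := T • e with hv
  set φ : EuclideanSpace ℝ (Fin d) → ℝ := fun x => ‖u x‖ ^ 2 with hφ
  set ψ : EuclideanSpace ℝ (Fin d) → ℝ := fun x => ‖pd i₀ u x‖ ^ 2 with hψ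
  have hφc : Continuous φ := (hu.continuous.norm).pow 2
  have hφs : HasCompactSupport φ := (hsupp.norm).comp_left (g := fun t : ℝ => t^2) (by norm_num)
  have hφint : Integrable φ := hφc.integrable_of_hasCompactSupport hφs
  have hφnn : ∀ x, 0 ≤ φ x := fun x => by positivity
  have hψc : Continuous ψ := ((pd_cont i₀ u hu).norm).pow 2
  have hψs : HasCompactSupport ψ :=
    ((pd_supp i₀ u hsupp).norm).comp_left (g := fun t : ℝ => t^2) (by norm_num)
  have hψint : Integrable ψ := hψc.integrable_of_hasCompactSupport hψs
  have hψnn : ∀ x, 0 ≤ ψ x := fun x => by positivity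
  have haφc : Continuous (fun x => a x * φ x) := ha_cont.mul hφc
  have haφs : HasCompactSupport (fun x => a x * φ x) := hφs.mul_left
  have haφint : Integrable (fun x => a x * φ x) := haφc.integrable_of_hasCompactSupport haφs
  have haφnn : ∀ x, 0 ≤ a x * φ x := fun x => mul_nonneg (ha_nonneg x) (hφnn x)
  set A : ℝ := ∫ x, a x * φ x with hA
  set N : ℝ := ∫ x, φ x with hN
  set D : ℝ := ∫ x, ψ x with hD
  -- outside estimate
  have hout : ∀ s : Set (EuclideanSpace ℝ (Fin d)), MeasurableSet s → (∀ x ∈ s, R < ‖x‖) →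
      (∫ x in s, φ x) ≤ (1/c) * A := by
    intro s hsm hsR
    have h1 : (∫ x in s, φ x) ≤ ∫ x in s, (1/c) * (a x * φ x) := by
      refine setIntegral_mono_on hφint.integrableOn
        ((haφint.const_mul (1/c)).integrableOn) hsm (fun x hx => ?_)
      have hax := haout x (hsR x hx)
      calc φ x = (1/c)*(c*φ x) := by field_simp
        _ ≤ (1/c)*(a x * φ x) :=
          mul_le_mul_of_nonneg_left (mul_le_mul_of_nonneg_right hax (hφnn x)) (by positivity)
    have h2 : (∫ x in s, (1/c) * (a x * φ x)) = (1/c) * ∫ x in s, a x * φ x :=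
      integral_const_mul _ _
    have h3 : (∫ x in s, a x * φ x) ≤ A :=
      setIntegral_le_integral haφint (Filter.Eventually.of_forall haφnn)
    have h4 : (1/c) * (∫ x in s, a x * φ x) ≤ (1/c) * A :=
      mul_le_mul_of_nonneg_left h3 (by positivity)
    calc (∫ x in s, φ x) ≤ (1/c) * ∫ x in s, a x * φ x := h1.trans_eq h2
      _ ≤ (1/c) * A := h4
  have hline : ∀ x : EuclideanSpace ℝ (Fin d), Continuous fun t : ℝ => x + t • e :=
    fun x => continuous_const.add (continuous_id.smul continuous_const)
  have key : ∀ x : EuclideanSpace ℝ (Fin d),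
      φ x ≤ φ (x + v) + ∫ t in (0:ℝ)..T, (ε * φ (x + t • e) + (1/ε) * ψ (x + t • e)) := by
    intro x
    have hγ : ∀ t : ℝ, HasDerivAt (fun s : ℝ => x + s • e) e t := by
      intro t
      simpa using ((hasDerivAt_id t).smul_const e).const_add x
    have hF : ∀ t : ℝ, HasDerivAt (fun s : ℝ => u (x + s • e)) (pd i₀ u (x + t • e)) t := by
      intro t
      exact ((hu.differentiable (by simp)) (x + t • e)).hasFDerivAt.comp_hasDerivAt t (hγ t)
    set h : ℝ → ℝ := fun t => (u (x + t • e)).re ^ 2 + (u (x + t • e)).im ^ 2 with hh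
    set h' : ℝ → ℝ := fun t =>
      2 * (u (x + t • e)).re * (pd i₀ u (x + t • e)).re
        + 2 * (u (x + t • e)).im * (pd i₀ u (x + t • e)).im with hh'
    have hre : ∀ t : ℝ, HasDerivAt (fun s => (u (x + s • e)).re) ((pd i₀ u (x + t • e)).re) t :=
      fun t => (Complex.reCLM.hasFDerivAt.comp_hasDerivAt t (hF t))
    have him : ∀ t : ℝ, HasDerivAt (fun s => (u (x + s • e)).im) ((pd i₀ u (x + t • e)).im) t :=
      fun t => (Complex.imCLM.hasFDerivAt.comp_hasDerivAt t (hF t))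
    have hderiv : ∀ t : ℝ, HasDerivAt h (h' t) t := by
      intro t
      have h1 := ((hre t).pow 2).add ((him t).pow 2)
      norm_num at h1
      convert h1 using 1
      all_goals rfl
    have hu1 : Continuous fun t : ℝ => u (x + t • e) := hu.continuous.comp (hline x)
    have hpd1 : Continuous fun t : ℝ => pd i₀ u (x + t • e) :=
      (pd_cont i₀ u hu).comp (hline x)
    have hcont' : Continuous h' :=
      ((continuous_const.mul (Complex.continuous_re.comp hu1)).mul
          (Complex.continuous_re.comp hpd1)).add
        ((continuous_const.mul (Complex.continuous_im.comp hu1)).mul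
          (Complex.continuous_im.comp hpd1))
    have hint : IntervalIntegrable h' volume 0 T := hcont'.intervalIntegrable _ _
    have hFTC : ∫ t in (0:ℝ)..T, h' t = h T - h 0 :=
      intervalIntegral.integral_eq_sub_of_hasDerivAt (fun t _ => hderiv t) hint
    have hφ0 : φ x = h 0 := by
      simp [hφ, hh, Complex.norm_mul_self_eq_normSq, Complex.sq_norm, Complex.normSq_apply, pow_two]
    have hφT : φ (x + v) = h T := by
      simp [hφ, hh, hv, Complex.norm_mul_self_eq_normSq, Complex.sq_norm, Complex.normSq_apply, pow_two]
    have hcont2 : Continuous fun t : ℝ => ε * φ (x + t • e) + (1/ε) * ψ (x + t • e) :=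
      (continuous_const.mul (hφc.comp (hline x))).add
        (continuous_const.mul (hψc.comp (hline x)))
    have hmono : ∫ t in (0:ℝ)..T, (-h' t) ≤
        ∫ t in (0:ℝ)..T, (ε * φ (x + t • e) + (1/ε) * ψ (x + t • e)) := by
      apply intervalIntegral.integral_mono_on hTpos.le hint.neg
        (hcont2.intervalIntegrable _ _)
      intro t ht
      have hpt := ptwise (u (x + t • e)).re (u (x + t • e)).im
        (pd i₀ u (x + t • e)).re (pd i₀ u (x + t • e)).im ε hεpos
      calc -h' t
          = -(2*((u (x + t • e)).re * (pd i₀ u (x + t • e)).re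
              + (u (x + t • e)).im * (pd i₀ u (x + t • e)).im)) := by
            simp only [hh']; ring
        _ ≤ ε * ((u (x + t • e)).re^2 + (u (x + t • e)).im^2)
              + (1/ε)*((pd i₀ u (x + t • e)).re^2 + (pd i₀ u (x + t • e)).im^2) := hpt
        _ = ε * φ (x + t • e) + (1/ε) * ψ (x + t • e) := by
            simp only [hφ, hψ, normsq_eq]
    have hneg : ∫ t in (0:ℝ)..T, (-h' t) = -(h T - h 0) := by
      rw [intervalIntegral.integral_neg, hFTC]
    linarith
  -- sets
  set cB : Set (EuclideanSpace ℝ (Fin d)) := Metric.closedBall 0 R with hcB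
  have hcBm : MeasurableSet cB := measurableSet_closedBall
  set W : Set (EuclideanSpace ℝ (Fin d)) := {y | R < ‖y‖} with hW
  have hWm : MeasurableSet W := by
    have : W = (fun y : EuclideanSpace ℝ (Fin d) => ‖y‖) ⁻¹' Set.Ioi R := rfl
    rw [this]; exact continuous_norm.measurable measurableSet_Ioi
  have hWR : ∀ y ∈ W, R < ‖y‖ := fun y hy => hy
  have hnormv : ‖v‖ = T := by
    rw [hv, norm_smul, hnorme, mul_one, Real.norm_eq_abs, abs_of_pos hTpos]
  have hsub : cB ⊆ (fun x => x + v) ⁻¹' W := by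
    intro x hx
    have hx' : ‖x‖ ≤ R := by
      simpa [hcB, Metric.mem_closedBall, dist_zero_right] using hx
    show R < ‖x + v‖
    have h1 : ‖v‖ ≤ ‖x + v‖ + ‖x‖ := by
      calc ‖v‖ = ‖(x + v) - x‖ := by congr 1; abel
        _ ≤ ‖x + v‖ + ‖x‖ := norm_sub_le _ _
    rw [hnormv, hT] at h1
    linarith
  have htrans : (∫ x in cB, φ (x + v)) ≤ (1/c) * A := by
    have hint2 : Integrable (fun x => φ (x + v)) := hφint.comp_add_right v
    have step1 : (∫ x in cB, φ (x + v)) ≤ ∫ x in (fun x => x + v) ⁻¹' W, φ (x + v) :=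
      setIntegral_mono_set hint2.integrableOn
        (Filter.Eventually.of_forall fun x => hφnn _) (HasSubset.Subset.eventuallyLE hsub)
    have step2 : (∫ x in (fun x => x + v) ⁻¹' W, φ (x + v)) = ∫ y in W, φ y :=
      (measurePreserving_add_right volume v).setIntegral_preimage_emb
        (MeasurableEquiv.addRight v).measurableEmbedding _ _
    rw [step2] at step1
    exact step1.trans (hout W hWm hWR)
  -- Fubini
  haveI hfin1 : IsFiniteMeasure (volume.restrict cB) := by
    constructor
    rw [Measure.restrict_apply_univ]
    exact (isCompact_closedBall (0 : EuclideanSpace ℝ (Fin d)) R).measure_lt_top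
  haveI hfin2 : IsFiniteMeasure (volume.restrict (Set.Ioc (0:ℝ) T)) := by
    constructor
    rw [Measure.restrict_apply_univ]
    exact measure_Ioc_lt_top
  set G : EuclideanSpace ℝ (Fin d) × ℝ → ℝ :=
    fun p => ε * φ (p.1 + p.2 • e) + (1/ε) * ψ (p.1 + p.2 • e) with hG
  have hGnn : ∀ p, 0 ≤ G p := fun p =>
    add_nonneg (mul_nonneg hεpos.le (hφnn _)) (mul_nonneg (by positivity) (hψnn _))
  have hGc : Continuous G := by
    have hmap : Continuous fun p : EuclideanSpace ℝ (Fin d) × ℝ => p.1 + p.2 • e :=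
      continuous_fst.add (continuous_snd.smul continuous_const)
    exact (continuous_const.mul (hφc.comp hmap)).add (continuous_const.mul (hψc.comp hmap))
  obtain ⟨xφ, hxφ⟩ := hφc.exists_forall_ge_of_hasCompactSupport hφs
  obtain ⟨xψ, hxψ⟩ := hψc.exists_forall_ge_of_hasCompactSupport hψs
  set M : ℝ := ε * φ xφ + (1/ε) * ψ xψ with hM
  have hGbd : ∀ p, ‖G p‖ ≤ M := by
    intro p
    rw [Real.norm_of_nonneg (hGnn p)]
    exact add_le_add (mul_le_mul_of_nonneg_left (hxφ _) hεpos.le)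
      (mul_le_mul_of_nonneg_left (hxψ _) (by positivity))
  have hGint : Integrable G ((volume.restrict cB).prod (volume.restrict (Set.Ioc (0:ℝ) T))) :=
    Integrable.mono' (integrable_const M) hGc.aestronglyMeasurable
      (Filter.Eventually.of_forall hGbd)
  have hswap : (∫ x in cB, ∫ t in Set.Ioc (0:ℝ) T, G (x, t))
      = ∫ t in Set.Ioc (0:ℝ) T, ∫ x in cB, G (x, t) := integral_integral_swap hGint
  have hinner : ∀ t : ℝ, (∫ x in cB, G (x, t)) ≤ ε * N + (1/ε) * D := by
    intro t
    have hi1 : Integrable (fun x => G (x, t)) :=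
      ((hφint.comp_add_right (t • e)).const_mul ε).add
        ((hψint.comp_add_right (t • e)).const_mul (1/ε))
    have hle := setIntegral_le_integral (s := cB) hi1 (Filter.Eventually.of_forall fun x => hGnn (x, t))
    have e1 : (∫ x, φ (x + t • e)) = N := by rw [hN]; exact integral_add_right_eq_self φ (t • e)
    have e2 : (∫ x, ψ (x + t • e)) = D := by rw [hD]; exact integral_add_right_eq_self ψ (t • e)
    have heq : (∫ x, G (x, t)) = ε * N + (1/ε) * D := by
      calc (∫ x, G (x, t))
          = (∫ x, (ε * φ (x + t • e) + (1/ε) * ψ (x + t • e))) := rfl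
        _ = ε * (∫ x, φ (x + t • e)) + (1/ε) * ∫ x, ψ (x + t • e) := by
            rw [integral_add ((hφint.comp_add_right _).const_mul ε)
              ((hψint.comp_add_right _).const_mul (1/ε)), integral_const_mul, integral_const_mul]
        _ = ε * N + (1/ε) * D := by rw [e1, e2]
    rw [heq] at hle
    exact hle
  have houter : (∫ t in Set.Ioc (0:ℝ) T, ∫ x in cB, G (x, t)) ≤ T * (ε * N + (1/ε) * D) := by
    have hnn : ∀ t, 0 ≤ ∫ x in cB, G (x, t) :=
      fun t => setIntegral_nonneg hcBm fun x _ => hGnn (x, t)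
    have hb := integral_mono_of_nonneg (μ := volume.restrict (Set.Ioc (0:ℝ) T))
      (Filter.Eventually.of_forall hnn) (integrable_const (ε * N + (1/ε) * D))
      (Filter.Eventually.of_forall fun t => hinner t)
    rw [setIntegral_const] at hb
    rw [Real.volume_real_Ioc_of_le hTpos.le, sub_zero, smul_eq_mul] at hb
    exact hb
  have hIdef : IntegrableOn (fun x => ∫ t in Set.Ioc (0:ℝ) T, G (x, t)) cB :=
    hGint.integral_prod_left
  have hmain : (∫ x in cB, φ x) ≤ (1/c) * A + T * (ε * N + (1/ε) * D) := by
    have h1 : (∫ x in cB, φ x) ≤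
        ∫ x in cB, (φ (x + v) + ∫ t in Set.Ioc (0:ℝ) T, G (x, t)) := by
      refine integral_mono_of_nonneg (Filter.Eventually.of_forall fun x => hφnn x)
        (((hφint.comp_add_right v).integrableOn).add hIdef)
        (Filter.Eventually.of_forall fun x => ?_)
      have hk := key x
      rw [intervalIntegral.integral_of_le hTpos.le] at hk
      exact hk
    have h2 : (∫ x in cB, (φ (x + v) + ∫ t in Set.Ioc (0:ℝ) T, G (x, t)))
        = (∫ x in cB, φ (x + v)) + ∫ x in cB, ∫ t in Set.Ioc (0:ℝ) T, G (x, t) :=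
      integral_add ((hφint.comp_add_right v).integrableOn) hIdef
    rw [h2] at h1
    rw [hswap] at h1
    linarith [htrans, houter]
  have hsplit : N = (∫ x in cB, φ x) + ∫ x in cBᶜ, φ x := by
    rw [hN, ← integral_add_compl hcBm hφint]
  have hcompl : (∫ x in cBᶜ, φ x) ≤ (1/c) * A := by
    refine hout cBᶜ hcBm.compl (fun x hx => ?_)
    simp only [hcB, Set.mem_compl_iff, Metric.mem_closedBall, dist_zero_right, not_le] at hx
    exact hx
  have hTε : T * ε = 1/2 := by rw [hT, hε]; field_simp; ring
  have hTη : T * (1/ε) = 18*R^2 := by rw [hT, hε]; field_simp; ring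
  have hexp : T * (ε * N + (1/ε) * D) = (T*ε) * N + (T*(1/ε)) * D := by ring
  rw [hexp, hTε, hTη] at hmain
  have hfinal : N ≤ (4/c) * A + 36*R^2 * D := by
    have h4c : (4:ℝ)/c * A = 4 * ((1/c) * A) := by ring
    linarith
  simp only [hA, hN, hD, hφ, hψ] at hfinal
  convert hfinal using 3

/-- low-frequency resolvent-type quadratic form estimate
`|Q(u) + λ²∫|u|² + λ∫a|u|²| ≥ C·|λ|·∫|u|²`. -/
theorem stmt11 {d : ℕ} (hd : 1 ≤ d)
    (g : EuclideanSpace ℝ (Fin d) → Matrix (Fin d) (Fin d) ℝ) (K : ℝ)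
    (hg : EllipticCoeff g K)
    (a : EuclideanSpace ℝ (Fin d) → ℝ) (ha : SmoothBdd a) (ha_nonneg : ∀ x, 0 ≤ a x)
    (c R : ℝ) (hc : 0 < c) (hR : 0 < R)
    (haout : ∀ x : EuclideanSpace ℝ (Fin d), R < ‖x‖ → c ≤ a x) :
    ∃ δ > (0:ℝ), ∃ C > (0:ℝ), ∃ lam₀ > (0:ℝ), ∀ lam : ℂ,
      lam ≠ 0 → ‖lam‖ < lam₀ →
      (0 < lam.re ∨ δ * |lam.re| < |lam.im|) →
      ∀ u : EuclideanSpace ℝ (Fin d) → ℂ, ContDiff ℝ (⊤ : ℕ∞) u → HasCompactSupport u →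
        C * ‖lam‖ * (∫ x, ‖u x‖ ^ 2) ≤
          ‖((∑ i, ∑ j, ∫ x, (g x i j : ℂ) * pd j u x * (starRingEnd ℂ) (pd i u x)) +
              lam ^ 2 * ((∫ x, ‖u x‖ ^ 2 : ℝ) : ℂ) +
              lam * ((∫ x, a x * ‖u x‖ ^ 2 : ℝ) : ℂ))‖ := by
  classical
  have hK0 : 0 < K := lt_of_lt_of_le one_pos hg.one_le
  set i₀ : Fin d := ⟨0, hd⟩ with hi₀
  set C₀ : ℝ := 4/c + 36*R^2*K + 1 with hC₀def
  have hC₀1 : 1 ≤ C₀ := by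
    have h1 : (0:ℝ) ≤ 4/c := by positivity
    have h2 : (0:ℝ) ≤ 36*R^2*K := by positivity
    rw [hC₀def]; linarith
  have hC₀pos : (0:ℝ) < C₀ := lt_of_lt_of_le one_pos hC₀1
  clear_value C₀
  have hCpos : (0:ℝ) < 1/(16*C₀) := by
    apply div_pos one_pos; nlinarith
  refine ⟨1, one_pos, 1/(16*C₀), hCpos, min (1/2) (1/(16*C₀)),
    lt_min (by norm_num) hCpos, ?_⟩
  intro lam hlam0 hlam_small hreg u hu hsupp
  set f : EuclideanSpace ℝ (Fin d) → ℝ := fun x =>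
    ∑ i, ∑ j, g x i j * ((pd j u x).re*(pd i u x).re + (pd j u x).im*(pd i u x).im) with hf
  have hpdc : ∀ i, Continuous (pd i u) := fun i => pd_cont i u hu
  have hpds : ∀ i, HasCompactSupport (pd i u) := fun i => pd_supp i u hsupp
  have hterm_int : ∀ i j : Fin d,
      Integrable (fun x => (g x i j : ℂ) * pd j u x * (starRingEnd ℂ) (pd i u x)) := by
    intro i j
    apply Continuous.integrable_of_hasCompactSupport
    · exact ((Complex.continuous_ofReal.comp (hg.smooth i j).continuous).mul (hpdc j)).mul
        (Complex.continuous_conj.comp (hpdc i))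
    · exact HasCompactSupport.mul_left
        ((hpds i).comp_left (g := (starRingEnd ℂ)) (map_zero _))
  have hfij_int : ∀ i j : Fin d, Integrable (fun x =>
      g x i j * ((pd j u x).re*(pd i u x).re + (pd j u x).im*(pd i u x).im)) := by
    intro i j
    apply Continuous.integrable_of_hasCompactSupport
    · exact (hg.smooth i j).continuous.mul
        (((Complex.continuous_re.comp (hpdc j)).mul (Complex.continuous_re.comp (hpdc i))).add
          ((Complex.continuous_im.comp (hpdc j)).mul (Complex.continuous_im.comp (hpdc i))))
    · have hjre : HasCompactSupport (fun x => (pd j u x).re) :=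
        (hpds j).comp_left (g := Complex.re) rfl
      have hjim : HasCompactSupport (fun x => (pd j u x).im) :=
        (hpds j).comp_left (g := Complex.im) rfl
      exact HasCompactSupport.mul_left ((hjre.mul_right).add (hjim.mul_right))
  have hf_int : Integrable f := by
    rw [hf]
    apply integrable_finset_sum
    intro i _
    exact integrable_finset_sum _ (fun j _ => hfij_int i j)
  set q : ℝ := ∫ x, f x with hq
  have hsum : (∑ i, ∑ j, ∫ x, (g x i j : ℂ) * pd j u x * (starRingEnd ℂ) (pd i u x))
      = ((q : ℝ) : ℂ) := by
    have h1 : ∀ i : Fin d, (∑ j, ∫ x, (g x i j : ℂ) * pd j u x * (starRingEnd ℂ) (pd i u x))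
        = ∫ x, ∑ j, (g x i j : ℂ) * pd j u x * (starRingEnd ℂ) (pd i u x) :=
      fun i => (integral_finset_sum _ (fun j _ => hterm_int i j)).symm
    calc (∑ i, ∑ j, ∫ x, (g x i j : ℂ) * pd j u x * (starRingEnd ℂ) (pd i u x))
        = ∑ i, ∫ x, ∑ j, (g x i j : ℂ) * pd j u x * (starRingEnd ℂ) (pd i u x) :=
          Finset.sum_congr rfl fun i _ => h1 i
      _ = ∫ x, ∑ i, ∑ j, (g x i j : ℂ) * pd j u x * (starRingEnd ℂ) (pd i u x) :=
          (integral_finset_sum _ (fun i _ =>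
            integrable_finset_sum _ (fun j _ => hterm_int i j))).symm
      _ = ∫ x, ((f x : ℝ) : ℂ) := by
          refine integral_congr_ae (Filter.Eventually.of_forall fun x => ?_)
          exact sum_eq_ofReal (g x) (fun i j => hg.symm x i j) (fun i => pd i u x)
      _ = ((q : ℝ) : ℂ) := by rw [hq]; exact integral_ofReal
  have hlow : ∀ x, (1/K) * ‖pd i₀ u x‖^2 ≤ f x := fun x =>
    quad_lower i₀ (g x) K hK0 (fun ξ => hg.ell_lower x ξ) (fun i => pd i u x)
  have hf_nn : ∀ x, 0 ≤ f x := fun x => le_trans (by positivity) (hlow x)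
  have hq_nn : 0 ≤ q := integral_nonneg hf_nn
  have hψ_int : Integrable (fun x => ‖pd i₀ u x‖^2) := by
    have hc : Continuous (fun x => ‖pd i₀ u x‖^2) := (hpdc i₀).norm.pow 2
    have hs : HasCompactSupport (fun x => ‖pd i₀ u x‖^2) :=
      ((hpds i₀).norm).comp_left (g := fun t : ℝ => t^2) (by norm_num)
    exact hc.integrable_of_hasCompactSupport hs
  have hψKf : ∀ x, ‖pd i₀ u x‖^2 ≤ K * f x := by
    intro x
    have h2 := mul_le_mul_of_nonneg_left (hlow x) hK0.le
    calc ‖pd i₀ u x‖^2 = K*((1/K)*‖pd i₀ u x‖^2) := by field_simp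
      _ ≤ K * f x := h2
  set D : ℝ := ∫ x, ‖pd i₀ u x‖^2 with hD
  have hD_le : D ≤ K * q := by
    rw [hD, hq]
    calc (∫ x, ‖pd i₀ u x‖^2) ≤ ∫ x, K * f x :=
          integral_mono hψ_int (hf_int.const_mul K) hψKf
      _ = K * ∫ x, f x := integral_const_mul _ _
  set N : ℝ := ∫ x, ‖u x‖^2 with hNdef
  set A : ℝ := ∫ x, a x * ‖u x‖^2 with hAdef
  have hN_nn : 0 ≤ N := integral_nonneg fun x => by positivity
  have hA_nn : 0 ≤ A := integral_nonneg fun x => mul_nonneg (ha_nonneg x) (by positivity)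
  have hPB := partB hd u hu hsupp a ha.1.continuous ha_nonneg c R hc hR haout
  rw [← hNdef, ← hAdef, ← hD] at hPB
  have hNC : N ≤ C₀ * (q + A) := by
    have h36 : 36*R^2*D ≤ 36*R^2*(K*q) := by
      apply mul_le_mul_of_nonneg_left hD_le (by positivity)
    have hc1 : (4/c) * A ≤ C₀ * A := by
      apply mul_le_mul_of_nonneg_right _ hA_nn
      rw [hC₀def]; nlinarith [sq_nonneg R, hK0.le, mul_nonneg (sq_nonneg R) hK0.le]
    have hc2 : 36*R^2*(K*q) ≤ C₀ * q := by
      have : 36*R^2*(K*q) = (36*R^2*K) * q := by ring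
      rw [this, hC₀def]
      apply mul_le_mul_of_nonneg_right _ hq_nn
      have h1 : (0:ℝ) ≤ 4/c := by positivity
      linarith
    have hexp : C₀*(q+A) = C₀*q + C₀*A := by ring
    linarith
  have hkey := keyC q A N C₀ hq_nn hA_nn hN_nn hC₀1 hNC lam hlam0 hlam_small hreg
  rw [hsum]
  exact hkey

end
end

section
/- Let d = 1 and let c : ℝ → ℝ be smooth, bounded, with c(x) ≥ c₀ > 0, and let χ : ℝ → ℝ be continuous with compact support. Then there exist δ > 0, C > 0 and λ₀ ∈ (0,1) such that for every λ ∈ ℂ with 0 < |λ| ≤ λ₀ and (Re λ > 0 or |Im λ| > δ|Re λ|), and every u ∈ C_c^∞(ℝ, ℂ): ∫ |χ(x)u(x)|² dx ≤ C·|λ|^{-1/2}·|∫ g(x)·u'(x)·conj(u'(x)) dx + λ²∫|u|² dx + λ∫ c|u|² dx|. -/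
open MeasureTheory

noncomputable section

private lemma ftc_bound (u : ℝ → ℂ) (hu : ContDiff ℝ (⊤ : ℕ∞) u) (hsupp : HasCompactSupport u)
    (x : ℝ) : ‖u x‖ ^ 2 ≤ ∫ t, 2 * ‖u t‖ * ‖deriv u t‖ := by
  have hud : Differentiable ℝ u := hu.differentiable (by simp)
  have hcu : Continuous u := hu.continuous
  have hcd : Continuous (deriv u) := hu.continuous_deriv (by simp)
  set F : ℝ → ℝ := fun t => (u t).re ^ 2 + (u t).im ^ 2 with hF
  set F' : ℝ → ℝ := fun t =>
    2 * (u t).re * (deriv u t).re + 2 * (u t).im * (deriv u t).im with hF'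
  have hnormF : ∀ t, ‖u t‖ ^ 2 = F t := by
    intro t
    rw [hF]
    rw [Complex.sq_norm, Complex.normSq_apply]
    ring
  have hder : ∀ t, HasDerivAt F (F' t) t := by
    intro t
    have h := (hud t).hasDerivAt
    have hre : HasDerivAt (fun s => (u s).re) (deriv u t).re t :=
      Complex.reCLM.hasFDerivAt.comp_hasDerivAt t h
    have him : HasDerivAt (fun s => (u s).im) (deriv u t).im t :=
      Complex.imCLM.hasFDerivAt.comp_hasDerivAt t h
    have h1 := (hre.fun_pow 2).fun_add (him.fun_pow 2)
    refine h1.congr_deriv ?_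
    rw [hF']
    push_cast
    ring
  have hFcont' : Continuous F' := by
    apply Continuous.add
    · exact (continuous_const.mul (Complex.continuous_re.comp hcu)).mul
        (Complex.continuous_re.comp hcd)
    · exact (continuous_const.mul (Complex.continuous_im.comp hcu)).mul
        (Complex.continuous_im.comp hcd)
  have hGcont : Continuous (fun t => 2 * ‖u t‖ * ‖deriv u t‖) :=
    (continuous_const.mul hcu.norm).mul hcd.norm
  have hGsupp : HasCompactSupport (fun t => 2 * ‖u t‖ * ‖deriv u t‖) := by
    apply HasCompactSupport.intro (hsupp : IsCompact (tsupport u))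
    intro t ht
    rw [image_eq_zero_of_notMem_tsupport ht]
    simp
  have hGint : Integrable (fun t => 2 * ‖u t‖ * ‖deriv u t‖) :=
    hGcont.integrable_of_hasCompactSupport hGsupp
  obtain ⟨R, hR⟩ := ((hsupp : IsCompact (tsupport u)).isBounded).subset_closedBall 0
  set a : ℝ := -(|R| + |x| + 1) with ha
  have hax : a ≤ x := by
    have := abs_nonneg R
    have := neg_abs_le x
    rw [ha]; linarith
  have hua : u a = 0 := by
    apply image_eq_zero_of_notMem_tsupport
    intro hmem
    have h2 := hR hmem
    rw [Metric.mem_closedBall, Real.dist_eq, sub_zero, ha] at h2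
    rw [abs_neg, abs_of_nonneg (by positivity)] at h2
    have := le_abs_self R
    have := abs_nonneg x
    linarith
  have key : ∫ t in a..x, F' t = F x - F a :=
    intervalIntegral.integral_eq_sub_of_hasDerivAt (fun t _ => hder t)
      (hFcont'.intervalIntegrable a x)
  have hFa : F a = 0 := by rw [hF]; simp [hua]
  have hmono : ∫ t in a..x, F' t ≤ ∫ t in a..x, 2 * ‖u t‖ * ‖deriv u t‖ := by
    apply intervalIntegral.integral_mono_on hax (hFcont'.intervalIntegrable a x)
      (hGcont.intervalIntegrable a x)
    intro t _
    have h2 := Complex.abs_re_le_norm ((starRingEnd ℂ) (u t) * deriv u t)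
    rw [norm_mul, Complex.norm_conj] at h2
    have h3 : ((starRingEnd ℂ) (u t) * deriv u t).re
        = (u t).re * (deriv u t).re + (u t).im * (deriv u t).im := by
      simp [Complex.mul_re]
      try ring
    rw [h3] at h2
    have h4 := le_trans (le_abs_self _) h2
    simp only [hF']
    linarith
  have hfin : ∫ t in a..x, 2 * ‖u t‖ * ‖deriv u t‖ ≤ ∫ t, 2 * ‖u t‖ * ‖deriv u t‖ := by
    rw [intervalIntegral.integral_of_le hax]
    apply setIntegral_le_integral hGint
    filter_upwards with t
    positivity
  rw [hnormF x]
  have : F x = ∫ t in a..x, F' t := by rw [key, hFa]; ring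
  rw [this]
  linarith

private lemma sector_quad (Q B a b r : ℝ) (hQ : 0 ≤ Q) (hB : 0 ≤ B) (hr0 : 0 ≤ r)
    (hr2 : r ^ 2 = a ^ 2 + b ^ 2) (hsec : 0 < a ∨ a ^ 2 ≤ r ^ 2 / 2) :
    ((Q + r * B) / 3) ^ 2 ≤ (Q + a * B) ^ 2 + (b * B) ^ 2 := by
  rcases hsec with h | h
  · nlinarith [sq_nonneg (Q - r * B), mul_nonneg (mul_nonneg h.le hQ) hB,
      mul_nonneg hQ (mul_nonneg hr0 hB), sq_nonneg B, sq_nonneg (b * B)]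
  · nlinarith [sq_nonneg (3 * Q + 4 * a * B), sq_nonneg (Q - r * B),
      mul_nonneg hQ (mul_nonneg hr0 hB), sq_nonneg B, sq_nonneg (b * B), sq_nonneg Q]

set_option maxHeartbeats 1600000 in
private lemma abs_sq_le (a b : ℝ) (h : |a| < |b|) : a ^ 2 ≤ b ^ 2 := by
  nlinarith [sq_abs a, sq_abs b, abs_nonneg a, abs_nonneg b]

private lemma ell_bound (gx K d : ℝ) (hK0 : 0 < K) (h : 1 / K ≤ gx) :
    d ^ 2 ≤ K * (gx * d ^ 2) := by
  rw [div_le_iff₀ hK0] at h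
  nlinarith [sq_nonneg d]

private lemma amgm_bound (a b s : ℝ) (hs : 0 < s) :
    2 * a * b ≤ (1 / s) * b ^ 2 + s * a ^ 2 := by
  rw [← sub_nonneg]
  have heq : ((1 / s) * b ^ 2 + s * a ^ 2) - 2 * a * b
      = (b ^ 2 + s ^ 2 * a ^ 2 - 2 * a * b * s) / s := by
    field_simp
  rw [heq]
  apply div_nonneg _ hs.le
  nlinarith [sq_nonneg (b - s * a)]

/-- one-dimensional cut-off resolvent estimate with loss `|λ|^{-1/2}`. -/
theorem stmt15
    (g : ℝ → ℝ) (hg_smooth : ContDiff ℝ (⊤ : ℕ∞) g)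
    (hg_bdd : ∀ n : ℕ, 1 ≤ n → ∃ M, ∀ x, ‖iteratedFDeriv ℝ n g x‖ ≤ M)
    (K : ℝ) (hK : 1 ≤ K) (hg_ell : ∀ x, 1 / K ≤ g x ∧ g x ≤ K)
    (cw : ℝ → ℝ) (hcw_smooth : ContDiff ℝ (⊤ : ℕ∞) cw)
    (Mc : ℝ) (hcw_bdd : ∀ x, cw x ≤ Mc)
    (c₀ : ℝ) (hc₀ : 0 < c₀) (hcw_pos : ∀ x, c₀ ≤ cw x)
    (χ : ℝ → ℝ) (hχ_cont : Continuous χ) (hχ_supp : HasCompactSupport χ) :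
    ∃ δ > (0:ℝ), ∃ C > (0:ℝ), ∃ lam₀ : ℝ, 0 < lam₀ ∧ lam₀ < 1 ∧ ∀ lam : ℂ,
      lam ≠ 0 → ‖lam‖ ≤ lam₀ →
      (0 < lam.re ∨ δ * |lam.re| < |lam.im|) →
      ∀ u : ℝ → ℂ, ContDiff ℝ (⊤ : ℕ∞) u → HasCompactSupport u →
        (∫ x, ‖(χ x : ℂ) * u x‖ ^ 2) ≤
          C * ‖lam‖ ^ (-(1:ℝ)/2) *
            ‖
              ((∫ x, (g x : ℂ) * deriv u x * (starRingEnd ℂ) (deriv u x)) +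
                lam ^ 2 * ((∫ x, ‖u x‖ ^ 2 : ℝ) : ℂ) +
                lam * ((∫ x, cw x * ‖u x‖ ^ 2 : ℝ) : ℂ))‖ := by
  have hK0 : (0:ℝ) < K := lt_of_lt_of_le one_pos hK
  have hiχ2 : Integrable (fun x => (χ x) ^ 2) := by
    apply (hχ_cont.pow 2).integrable_of_hasCompactSupport
    apply HasCompactSupport.intro (hχ_supp : IsCompact (tsupport χ))
    intro t ht
    rw [Pi.pow_apply, image_eq_zero_of_notMem_tsupport ht]
    simp
  set Iχ : ℝ := ∫ x, (χ x) ^ 2 with hIχ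
  have hIχ0 : 0 ≤ Iχ := integral_nonneg fun x => sq_nonneg _
  have hCpos : 0 < Iχ * (6 * K + 6 / c₀) + 1 := by
    have h1 : 0 ≤ Iχ * (6 * K + 6 / c₀) := mul_nonneg hIχ0 (by positivity)
    linarith
  refine ⟨1, one_pos, Iχ * (6 * K + 6 / c₀) + 1, hCpos, min (1/2) (c₀/6),
    lt_min (by norm_num) (by positivity),
    lt_of_le_of_lt (min_le_left _ _) (by norm_num), ?_⟩
  intro lam hne hle hsector u hu hsu
  have hcu : Continuous u := hu.continuous
  have hcd : Continuous (deriv u) := hu.continuous_deriv (by simp)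
  -- integrability of all real integrands
  have hiA : Integrable (fun x => ‖u x‖ ^ 2) := by
    apply (hcu.norm.pow 2).integrable_of_hasCompactSupport
    apply HasCompactSupport.intro (hsu : IsCompact (tsupport u))
    intro t ht
    simp only [Pi.mul_apply, Pi.pow_apply]; rw [image_eq_zero_of_notMem_tsupport ht]; simp
  have hiP : Integrable (fun x => ‖deriv u x‖ ^ 2) := by
    apply (hcd.norm.pow 2).integrable_of_hasCompactSupport
    apply HasCompactSupport.intro (hsu.deriv : IsCompact (tsupport (deriv u)))
    intro t ht
    simp only [Pi.mul_apply, Pi.pow_apply]; rw [image_eq_zero_of_notMem_tsupport ht]; simp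
  have hiQ : Integrable (fun x => g x * ‖deriv u x‖ ^ 2) := by
    apply (hg_smooth.continuous.mul (hcd.norm.pow 2)).integrable_of_hasCompactSupport
    apply HasCompactSupport.intro (hsu.deriv : IsCompact (tsupport (deriv u)))
    intro t ht
    simp only [Pi.mul_apply, Pi.pow_apply]; rw [image_eq_zero_of_notMem_tsupport ht]; simp
  have hiB : Integrable (fun x => cw x * ‖u x‖ ^ 2) := by
    apply (hcw_smooth.continuous.mul (hcu.norm.pow 2)).integrable_of_hasCompactSupport
    apply HasCompactSupport.intro (hsu : IsCompact (tsupport u))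
    intro t ht
    simp only [Pi.mul_apply, Pi.pow_apply]; rw [image_eq_zero_of_notMem_tsupport ht]; simp
  have hiχu : Integrable (fun x => (χ x) ^ 2 * ‖u x‖ ^ 2) := by
    apply ((hχ_cont.pow 2).mul (hcu.norm.pow 2)).integrable_of_hasCompactSupport
    apply HasCompactSupport.intro (hχ_supp : IsCompact (tsupport χ))
    intro t ht
    simp only [Pi.mul_apply, Pi.pow_apply]; rw [image_eq_zero_of_notMem_tsupport ht]; simp
  set A : ℝ := ∫ x, ‖u x‖ ^ 2 with hAdef
  set B : ℝ := ∫ x, cw x * ‖u x‖ ^ 2 with hBdef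
  set P : ℝ := ∫ x, ‖deriv u x‖ ^ 2 with hPdef
  set Q : ℝ := ∫ x, g x * ‖deriv u x‖ ^ 2 with hQdef
  have hA0 : 0 ≤ A := integral_nonneg fun x => sq_nonneg _
  have hP0 : 0 ≤ P := integral_nonneg fun x => sq_nonneg _
  have hQ0 : 0 ≤ Q := integral_nonneg fun x => by
    have h1 := (hg_ell x).1
    have : (0:ℝ) ≤ 1 / K := by positivity
    exact mul_nonneg (by linarith) (sq_nonneg _)
  have hB0 : 0 ≤ B := integral_nonneg fun x =>
    mul_nonneg (le_trans hc₀.le (hcw_pos x)) (sq_nonneg _)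
  have hPQ : P ≤ K * Q := by
    have hpt : ∀ x, ‖deriv u x‖ ^ 2 ≤ K * (g x * ‖deriv u x‖ ^ 2) := fun x =>
      ell_bound (g x) K ‖deriv u x‖ hK0 (hg_ell x).1
    calc P ≤ ∫ x, K * (g x * ‖deriv u x‖ ^ 2) :=
          integral_mono hiP (hiQ.const_mul K) hpt
      _ = K * Q := by rw [integral_const_mul]
  have hAB : c₀ * A ≤ B := by
    have hpt : ∀ x, c₀ * ‖u x‖ ^ 2 ≤ cw x * ‖u x‖ ^ 2 := fun x =>
      mul_le_mul_of_nonneg_right (hcw_pos x) (sq_nonneg _)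
    calc c₀ * A = ∫ x, c₀ * ‖u x‖ ^ 2 := by rw [integral_const_mul]
      _ ≤ B := integral_mono (hiA.const_mul c₀) hiB hpt
  clear_value A B P Q Iχ
  -- rewrite the first complex integral
  have hfirst : (∫ x, (g x : ℂ) * deriv u x * (starRingEnd ℂ) (deriv u x)) = ((Q : ℝ) : ℂ) := by
    calc (∫ x, (g x : ℂ) * deriv u x * (starRingEnd ℂ) (deriv u x))
        = ∫ x, ((g x * ‖deriv u x‖ ^ 2 : ℝ) : ℂ) := by
          apply integral_congr_ae
          filter_upwards with x
          rw [mul_assoc, Complex.mul_conj, Complex.ofReal_mul,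
            Complex.normSq_eq_norm_sq]
      _ = ((Q : ℝ) : ℂ) := by rw [hQdef]; exact integral_ofReal
  rw [hfirst]
  set r : ℝ := ‖lam‖ with hr
  have hr0 : 0 < r := norm_pos_iff.mpr hne
  set a : ℝ := lam.re with haa
  set b : ℝ := lam.im with hbb
  have hr2 : r ^ 2 = a ^ 2 + b ^ 2 := by
    rw [hr, Complex.sq_norm, Complex.normSq_apply, haa, hbb]; ring
  set z : ℂ := ((Q : ℝ) : ℂ) + lam ^ 2 * ((A : ℝ) : ℂ) + lam * ((B : ℝ) : ℂ) with hz
  set Z : ℝ := ‖z‖ with hZ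
  have hZ0 : 0 ≤ Z := norm_nonneg z
  -- lower bound for |Q + lam B|
  set w : ℂ := ((Q : ℝ) : ℂ) + lam * ((B : ℝ) : ℂ) with hw
  have hw_re : w.re = Q + a * B := by
    simp [hw, Complex.add_re, Complex.mul_re, haa]
  have hw_im : w.im = b * B := by
    simp [hw, Complex.add_im, Complex.mul_im, hbb]
  have habsw_sq : ‖w‖ ^ 2 = (Q + a * B) ^ 2 + (b * B) ^ 2 := by
    rw [Complex.sq_norm, Complex.normSq_apply, hw_re, hw_im]; ring
  have hsec : 0 < a ∨ a ^ 2 ≤ r ^ 2 / 2 := by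
    rcases hsector with h | h
    · exact Or.inl h
    · right
      rw [one_mul] at h
      have hab : a ^ 2 ≤ b ^ 2 := abs_sq_le a b h
      linarith
  have hlow1 : (Q + r * B) / 3 ≤ ‖w‖ := by
    have h9 := sector_quad Q B a b r hQ0 hB0 hr0.le hr2 hsec
    rw [← habsw_sq] at h9
    exact le_of_pow_le_pow_left₀ two_ne_zero (norm_nonneg w) h9
  have htri : ‖w‖ ≤ Z + r ^ 2 * A := by
    have heq : w = z + -(lam ^ 2 * ((A : ℝ) : ℂ)) := by rw [hw, hz]; ring
    calc ‖w‖ = ‖z + -(lam ^ 2 * ((A : ℝ) : ℂ))‖ := by rw [← heq]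
      _ ≤ ‖z‖ + ‖-(lam ^ 2 * ((A : ℝ) : ℂ))‖ := norm_add_le _ _
      _ = Z + r ^ 2 * A := by
          rw [norm_neg, norm_mul, norm_pow, Complex.norm_of_nonneg hA0, hZ, hr]
  clear_value z Z w r a b
  have hrle : r ≤ c₀ / 6 := le_trans hle (min_le_right _ _)
  have hr2A : r ^ 2 * A ≤ r * B / 6 := by
    have h1 : r * (r * A) ≤ (c₀ / 6) * (r * A) :=
      mul_le_mul_of_nonneg_right hrle (mul_nonneg hr0.le hA0)
    have h2 : (c₀ * A) * (r / 6) ≤ B * (r / 6) :=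
      mul_le_mul_of_nonneg_right hAB (div_nonneg hr0.le (by norm_num))
    calc r ^ 2 * A = r * (r * A) := by ring
      _ ≤ (c₀ / 6) * (r * A) := h1
      _ = (c₀ * A) * (r / 6) := by ring
      _ ≤ B * (r / 6) := h2
      _ = r * B / 6 := by ring
  have hrB0 : 0 ≤ r * B := mul_nonneg hr0.le hB0
  have hZlow : Q / 3 + r * B / 6 ≤ Z := by linarith
  have hQ6 : Q ≤ 6 * Z := by linarith
  have hB6 : r * B ≤ 6 * Z := by linarith
  have hA6 : r * A ≤ 6 * Z / c₀ := by
    rw [le_div_iff₀ hc₀]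
    have h1 : r * (c₀ * A) ≤ r * B := mul_le_mul_of_nonneg_left hAB hr0.le
    calc r * A * c₀ = r * (c₀ * A) := by ring
      _ ≤ r * B := h1
      _ ≤ 6 * Z := hB6
  -- Sobolev-type sup bound
  set s : ℝ := Real.sqrt r with hs
  have hs0 : 0 < s := Real.sqrt_pos.mpr hr0
  have hs2 : s ^ 2 = r := Real.sq_sqrt hr0.le
  clear_value s
  set Sb : ℝ := (1 / s) * P + s * A with hSb
  clear_value Sb
  have hsup : ∀ x, ‖u x‖ ^ 2 ≤ Sb := by
    intro x
    have h1 := ftc_bound u hu hsu x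
    have hpt : ∀ t, 2 * ‖u t‖ * ‖deriv u t‖ ≤ (1 / s) * ‖deriv u t‖ ^ 2 + s * ‖u t‖ ^ 2 :=
      fun t => amgm_bound ‖u t‖ ‖deriv u t‖ s hs0
    have h2 : (∫ t, 2 * ‖u t‖ * ‖deriv u t‖)
        ≤ ∫ t, ((1 / s) * ‖deriv u t‖ ^ 2 + s * ‖u t‖ ^ 2) := by
      apply integral_mono _ ((hiP.const_mul _).add (hiA.const_mul _)) hpt
      exact ((continuous_const.mul hcu.norm).mul hcd.norm).integrable_of_hasCompactSupport
        (by
          apply HasCompactSupport.intro (hsu : IsCompact (tsupport u))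
          intro t ht
          simp only [Pi.mul_apply]; rw [image_eq_zero_of_notMem_tsupport ht]; simp)
    have h3 : (∫ t, ((1 / s) * ‖deriv u t‖ ^ 2 + s * ‖u t‖ ^ 2)) = Sb := by
      rw [integral_add (hiP.const_mul _) (hiA.const_mul _), integral_const_mul,
        integral_const_mul, hSb, hPdef, hAdef]
    linarith
  have hSb0 : 0 ≤ Sb := le_trans (sq_nonneg ‖u 0‖) (hsup 0)
  -- bound Sb
  have hSbZ : Sb ≤ (6 * K + 6 / c₀) * Z * (1 / s) := by
    have h1 : (1 / s) * P ≤ (1 / s) * (6 * K * Z) := by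
      apply mul_le_mul_of_nonneg_left _ (by positivity)
      calc P ≤ K * Q := hPQ
        _ ≤ K * (6 * Z) := mul_le_mul_of_nonneg_left hQ6 hK0.le
        _ = 6 * K * Z := by ring
    have h2 : s * A ≤ (1 / s) * (6 * Z / c₀) := by
      have heq : s * A = (1 / s) * (r * A) := by
        rw [← hs2]; field_simp
      rw [heq]
      exact mul_le_mul_of_nonneg_left hA6 (by positivity)
    have heq2 : (1 / s) * (6 * K * Z) + (1 / s) * (6 * Z / c₀)
        = (6 * K + 6 / c₀) * Z * (1 / s) := by field_simp
    rw [hSb]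
    linarith
  -- final chain
  have hLHSeq : (∫ x, ‖(χ x : ℂ) * u x‖ ^ 2) = ∫ x, (χ x) ^ 2 * ‖u x‖ ^ 2 := by
    apply integral_congr_ae
    filter_upwards with x
    rw [norm_mul, Complex.norm_real, mul_pow, Real.norm_eq_abs, sq_abs]
  have hmono2 : (∫ x, (χ x) ^ 2 * ‖u x‖ ^ 2) ≤ Iχ * Sb := by
    calc (∫ x, (χ x) ^ 2 * ‖u x‖ ^ 2) ≤ ∫ x, (χ x) ^ 2 * Sb := by
          apply integral_mono hiχu (hiχ2.mul_const Sb)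
          intro x
          exact mul_le_mul_of_nonneg_left (hsup x) (sq_nonneg _)
      _ = Iχ * Sb := by rw [integral_mul_const, hIχ]
  have hpow : r ^ (-(1:ℝ)/2) = 1 / s := by
    have h1 : r ^ (-(1:ℝ)/2) = (r ^ ((1:ℝ)/2))⁻¹ := by
      rw [← Real.rpow_neg hr0.le]
      norm_num
    rw [h1, hs, Real.sqrt_eq_rpow]
    exact (one_div _).symm
  rw [hpow]
  have hfin : Iχ * Sb ≤ (Iχ * (6 * K + 6 / c₀) + 1) * (1 / s) * Z := by
    calc Iχ * Sb ≤ Iχ * ((6 * K + 6 / c₀) * Z * (1 / s)) :=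
          mul_le_mul_of_nonneg_left hSbZ hIχ0
      _ = (Iχ * (6 * K + 6 / c₀)) * ((1 / s) * Z) := by ring
      _ ≤ (Iχ * (6 * K + 6 / c₀) + 1) * ((1 / s) * Z) := by
          apply mul_le_mul_of_nonneg_right (by linarith)
            (mul_nonneg (by positivity) hZ0)
      _ = (Iχ * (6 * K + 6 / c₀) + 1) * (1 / s) * Z := by ring
  calc (∫ x, ‖(χ x : ℂ) * u x‖ ^ 2) = ∫ x, (χ x) ^ 2 * ‖u x‖ ^ 2 := hLHSeq
    _ ≤ Iχ * Sb := hmono2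
    _ ≤ (Iχ * (6 * K + 6 / c₀) + 1) * (1 / s) * Z := hfin

end
end
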